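/- arXiv:2201.04884 — 5 statements merged into one kernel-verified Lean document; each statement's English description precedes it below -/
import Mathlib

section
/- Let n ≥ 3 and m ≥ 2 be integers. Assume R(T, 2K_{m−1}) ≤ (n−1)(m−2)+2 for every tree T on n vertices. Let T* be a tree on n vertices with a leaf a, and let T** be obtained from T* by deleting a leaf b ≠ a and adding a new vertex adjacent to a (the 'Stretching' operation). If R(T*, 2K_m) ≤ (n−1)(m−1)+2, then R(T**, 2K_m) ≤ (n−1)(m−1)+2. -/
open SimpleGraph Finset

/-- `G` embeds into `H` (a copy of `G` appears in `H`). -/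
def graphEmbeds {V W : Type*} (G : SimpleGraph V) (H : SimpleGraph W) : Prop :=
  ∃ f : V → W, Function.Injective f ∧ ∀ u v, G.Adj u v → H.Adj (f u) (f v)

/-- `N` is large enough for the Ramsey property: every red/blue coloring of `K_N`
(the red graph `R`, blue graph `Rᶜ`) contains a red `G` or a blue `H`. -/
def isRamsey {V W : Type*} (G : SimpleGraph V) (H : SimpleGraph W) (N : ℕ) : Prop :=
  ∀ R : SimpleGraph (Fin N), graphEmbeds G R ∨ graphEmbeds H Rᶜ

/-- The Ramsey number `R(G,H)`. -/
noncomputable def ramsey {V W : Type*} (G : SimpleGraph V) (H : SimpleGraph W) : ℕ :=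
  sInf {N | isRamsey G H N}

/-- `t` disjoint copies of the complete graph `K_m`. -/
def kCliques (t m : ℕ) : SimpleGraph (Fin t × Fin m) where
  Adj x y := x.1 = y.1 ∧ x.2 ≠ y.2
  symm := ⟨fun x y h => ⟨h.1.symm, h.2.symm⟩⟩
  loopless := ⟨fun x h => h.2 rfl⟩

/-- The chromatic number as a natural number. -/
noncomputable def chromNum {V : Type*} (G : SimpleGraph V) : ℕ := sInf {n | G.Colorable n}

/-- The chromatic surplus: the minimum size of a color class over all proper
colorings with `chromNum G` colors. -/
noncomputable def surplus {V : Type*} [Fintype V] (G : SimpleGraph V) : ℕ :=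
  sInf {k | ∃ C : G.Coloring (Fin (chromNum G)), ∃ i : Fin (chromNum G),
    (Finset.univ.filter (fun v => C v = i)).card = k}

/-- `a` is a leaf of `G`: it has a unique neighbor. -/
def IsLeaf {V : Type*} (G : SimpleGraph V) (a : V) : Prop := ∃! w, G.Adj a w

/-- Stretching: delete a leaf `b` and attach a new vertex (reusing the label `b`)
to the leaf `a`. -/
def isStretch {V : Type*} (T T' : SimpleGraph V) : Prop :=
  ∃ a b : V, a ≠ b ∧ IsLeaf T a ∧ IsLeaf T b ∧
    ∀ x y, T'.Adj x y ↔
      ((T.Adj x y ∧ x ≠ b ∧ y ≠ b) ∨ (x = b ∧ y = a) ∨ (x = a ∧ y = b))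

/-- Expanding at a vertex `u` of degree `d` (`2 ≤ d ≤ n-2`) all of whose neighbors
are leaves except `z0`: delete a leaf `b` outside `N[u]` and attach a new vertex
(reusing the label `b`) to `u`. -/
def isExpand {V : Type*} [Fintype V] (T T' : SimpleGraph V) : Prop :=
  ∃ u b z0 : V, T.Adj u z0 ∧ ¬ IsLeaf T z0 ∧
    (∀ z, T.Adj u z → z ≠ z0 → IsLeaf T z) ∧
    2 ≤ (T.neighborSet u).ncard ∧ (T.neighborSet u).ncard ≤ Fintype.card V - 2 ∧
    IsLeaf T b ∧ b ≠ u ∧ ¬ T.Adj u b ∧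
    ∀ x y, T'.Adj x y ↔
      ((T.Adj x y ∧ x ≠ b ∧ y ≠ b) ∨ (x = b ∧ y = u) ∨ (x = u ∧ y = b))

/-- Disjoint union of `K_m` and `K_l`. -/
def kUnion (m l : ℕ) : SimpleGraph (Fin m ⊕ Fin l) where
  Adj x y := x ≠ y ∧ ((x.isLeft ∧ y.isLeft) ∨ (x.isRight ∧ y.isRight))
  symm := ⟨fun x y h => ⟨h.1.symm, h.2.imp (fun p => ⟨p.2, p.1⟩) (fun p => ⟨p.2, p.1⟩)⟩⟩
  loopless := ⟨fun x h => h.1 rfl⟩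

/-- Disjoint union of `k` graphs, each on `Fin n`. -/
def disjUnion {k n : ℕ} (Fs : Fin k → SimpleGraph (Fin n)) :
    SimpleGraph (Fin k × Fin n) where
  Adj x y := x.1 = y.1 ∧ (Fs x.1).Adj x.2 y.2
  symm := by
    constructor
    rintro ⟨i, a⟩ ⟨j, b⟩ ⟨h1, h2⟩
    dsimp at h1 h2 ⊢
    subst h1
    exact ⟨rfl, h2.symm⟩
  loopless := by
    constructor
    rintro ⟨i, a⟩ ⟨h1, h2⟩
    exact (Fs i).loopless.irrefl a h2

/-- Disjoint union of graphs `Fs i` on `Fin (n i)`. -/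
def sigmaUnion {r : ℕ} {n : Fin r → ℕ} (Fs : ∀ i, SimpleGraph (Fin (n i))) :
    SimpleGraph (Σ i, Fin (n i)) where
  Adj x y := ∃ (i : Fin r) (a b : Fin (n i)), x = ⟨i, a⟩ ∧ y = ⟨i, b⟩ ∧ (Fs i).Adj a b
  symm := by
    constructor
    rintro x y ⟨i, a, b, hx, hy, h⟩
    exact ⟨i, b, a, hy, hx, h.symm⟩
  loopless := by
    constructor
    rintro x ⟨i, a, b, hx, hy, h⟩
    rw [hx] at hy
    obtain ⟨-, hab⟩ := (Sigma.mk.inj_iff).mp hy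
    exact (Fs i).loopless.irrefl a (by cases eq_of_heq hab; exact h)

noncomputable section StretchAux
open Classical
attribute [local instance] Classical.propDecidable

def RedClq {N : ℕ} (R : SimpleGraph (Fin N)) (C : Finset (Fin N)) : Prop :=
  ∀ x ∈ C, ∀ y ∈ C, x ≠ y → R.Adj x y

def BlueClq {N : ℕ} (R : SimpleGraph (Fin N)) (C : Finset (Fin N)) : Prop :=
  ∀ x ∈ C, ∀ y ∈ C, x ≠ y → ¬ R.Adj x y

def CliqueRam (s t N : ℕ) : Prop :=
  ∀ R : SimpleGraph (Fin N),
    (∃ C : Finset (Fin N), C.card = s ∧ RedClq R C) ∨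
    (∃ C : Finset (Fin N), C.card = t ∧ BlueClq R C)

lemma cliqueRam_exists : ∀ s t : ℕ, ∃ N, CliqueRam s t N := by
  intro s
  induction s with
  | zero =>
    intro t
    exact ⟨0, fun R => Or.inl ⟨∅, rfl, by simp [RedClq]⟩⟩
  | succ s ihs =>
    intro t
    induction t with
    | zero =>
      exact ⟨0, fun R => Or.inr ⟨∅, rfl, by simp [BlueClq]⟩⟩
    | succ t iht =>
      obtain ⟨N1, hN1⟩ := ihs (t+1)
      obtain ⟨N2, hN2⟩ := iht
      refine ⟨N1 + N2 + 1, fun R => ?_⟩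
      set v : Fin (N1 + N2 + 1) := ⟨N1 + N2, by omega⟩ with hv
      set red : Finset (Fin (N1+N2+1)) := univ.filter (fun x => R.Adj v x) with hred
      set blue : Finset (Fin (N1+N2+1)) := univ.filter (fun x => x ≠ v ∧ ¬ R.Adj v x) with hblue
      have hcard : N1 + N2 ≤ red.card + blue.card := by
        have hsub : univ ⊆ insert v (red ∪ blue) := by
          intro x _
          by_cases hx : x = v
          · simp [hx]
          · by_cases hadj : R.Adj v x
            · simp [hred, hadj, Finset.mem_insert]
            · simp [hblue, hx, hadj, Finset.mem_insert]
        have h1 : (univ : Finset (Fin (N1+N2+1))).card ≤ (insert v (red ∪ blue)).card :=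
          Finset.card_le_card hsub
        have h2 := Finset.card_insert_le v (red ∪ blue)
        have h3 := Finset.card_union_le red blue
        have h4 : (univ : Finset (Fin (N1+N2+1))).card = N1 + N2 + 1 := by simp
        omega
      rcases le_or_gt N1 red.card with hbig | hsmall
      · -- use red neighborhood
        obtain ⟨C, hCsub, hCcard⟩ := Finset.exists_subset_card_eq hbig
        have e := C.orderIsoOfFin hCcard
        set g : Fin N1 → Fin (N1+N2+1) := fun i => (e i : Fin (N1+N2+1)) with hg
        have hginj : Function.Injective g := by
          intro i j hij
          exact e.injective (Subtype.ext hij)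
        have hgmem : ∀ i, g i ∈ C := fun i => (e i).2
        rcases hN1 (R.comap g) with ⟨D, hDcard, hDred⟩ | ⟨D, hDcard, hDblue⟩
        · -- red K_s in nbrs, add v
          refine Or.inl ⟨insert v (D.image g), ?_, ?_⟩
          · rw [Finset.card_insert_of_notMem, Finset.card_image_of_injective _ hginj, hDcard]
            intro hvmem
            obtain ⟨i, _, hi⟩ := Finset.mem_image.mp hvmem
            have : R.Adj v (g i) := by
              have := hCsub (hgmem i)
              simp [hred] at this
              exact this
            rw [hi] at this
            exact R.loopless.irrefl v this
          · intro x hx y hy hxy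
            rcases Finset.mem_insert.mp hx with rfl | hx
            · rcases Finset.mem_insert.mp hy with rfl | hy
              · exact absurd rfl hxy
              · obtain ⟨i, _, rfl⟩ := Finset.mem_image.mp hy
                have := hCsub (hgmem i); simp [hred] at this; exact this
            · rcases Finset.mem_insert.mp hy with rfl | hy
              · obtain ⟨i, _, rfl⟩ := Finset.mem_image.mp hx
                have := hCsub (hgmem i); simp [hred] at this; exact this.symm
              · obtain ⟨i, hiD, rfl⟩ := Finset.mem_image.mp hx
                obtain ⟨j, hjD, rfl⟩ := Finset.mem_image.mp hy
                have hij : i ≠ j := fun h => hxy (by rw [h])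
                exact hDred i hiD j hjD hij
        · refine Or.inr ⟨D.image g, ?_, ?_⟩
          · rw [Finset.card_image_of_injective _ hginj, hDcard]
          · intro x hx y hy hxy
            obtain ⟨i, hiD, rfl⟩ := Finset.mem_image.mp hx
            obtain ⟨j, hjD, rfl⟩ := Finset.mem_image.mp hy
            have hij : i ≠ j := fun h => hxy (by rw [h])
            exact hDblue i hiD j hjD hij
      · have hbig2 : N2 ≤ blue.card := by omega
        obtain ⟨C, hCsub, hCcard⟩ := Finset.exists_subset_card_eq hbig2
        have e := C.orderIsoOfFin hCcard
        set g : Fin N2 → Fin (N1+N2+1) := fun i => (e i : Fin (N1+N2+1)) with hg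
        have hginj : Function.Injective g := by
          intro i j hij
          exact e.injective (Subtype.ext hij)
        have hgmem : ∀ i, g i ∈ C := fun i => (e i).2
        have hgprop : ∀ i, g i ≠ v ∧ ¬ R.Adj v (g i) := by
          intro i
          have := hCsub (hgmem i); simp [hblue] at this; exact this
        rcases hN2 (R.comap g) with ⟨D, hDcard, hDred⟩ | ⟨D, hDcard, hDblue⟩
        · refine Or.inl ⟨D.image g, ?_, ?_⟩
          · rw [Finset.card_image_of_injective _ hginj, hDcard]
          · intro x hx y hy hxy
            obtain ⟨i, hiD, rfl⟩ := Finset.mem_image.mp hx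
            obtain ⟨j, hjD, rfl⟩ := Finset.mem_image.mp hy
            exact hDred i hiD j hjD (fun h => hxy (by rw [h]))
        · refine Or.inr ⟨insert v (D.image g), ?_, ?_⟩
          · rw [Finset.card_insert_of_notMem, Finset.card_image_of_injective _ hginj, hDcard]
            intro hvmem
            obtain ⟨i, _, hi⟩ := Finset.mem_image.mp hvmem
            exact (hgprop i).1 hi
          · intro x hx y hy hxy
            rcases Finset.mem_insert.mp hx with rfl | hx
            · rcases Finset.mem_insert.mp hy with rfl | hy
              · exact absurd rfl hxy
              · obtain ⟨i, _, rfl⟩ := Finset.mem_image.mp hy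
                exact (hgprop i).2
            · rcases Finset.mem_insert.mp hy with rfl | hy
              · obtain ⟨i, _, rfl⟩ := Finset.mem_image.mp hx
                exact fun h => (hgprop i).2 h.symm
              · obtain ⟨i, hiD, rfl⟩ := Finset.mem_image.mp hx
                obtain ⟨j, hjD, rfl⟩ := Finset.mem_image.mp hy
                exact hDblue i hiD j hjD (fun h => hxy (by rw [h]))

lemma isRamsey_mono {V W : Type*} (G : SimpleGraph V) (H : SimpleGraph W) {N M : ℕ}
    (h : isRamsey G H N) (hNM : N ≤ M) : isRamsey G H M := by
  intro R
  have c : Fin N → Fin M := fun i => Fin.castLE hNM i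
  have hc : Function.Injective (fun i => Fin.castLE hNM i) := fun i j hij => by
    simpa [Fin.ext_iff] using hij
  rcases h (R.comap (fun i => Fin.castLE hNM i)) with ⟨f, hfinj, hfadj⟩ | ⟨f, hfinj, hfadj⟩
  · exact Or.inl ⟨fun v => Fin.castLE hNM (f v), fun u v huv => hfinj (hc huv),
      fun u v huv => hfadj u v huv⟩
  · refine Or.inr ⟨fun v => Fin.castLE hNM (f v), fun u v huv => hfinj (hc huv), ?_⟩
    intro u v huv
    have := hfadj u v huv
    simp only [compl_adj, comap_adj] at this ⊢
    exact ⟨fun h' => this.1 (hc h'), this.2⟩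

lemma isRamsey_of_ramsey_le {V W : Type*} (G : SimpleGraph V) (H : SimpleGraph W) {K : ℕ}
    (hne : ∃ N, isRamsey G H N) (hle : ramsey G H ≤ K) : isRamsey G H K := by
  have hmem : ramsey G H ∈ {N | isRamsey G H N} := Nat.sInf_mem hne
  exact isRamsey_mono G H hmem hle

lemma exists_isRamsey_kCliques (n2 m2 : ℕ) (G : SimpleGraph (Fin n2)) :
    ∃ N, isRamsey G (kCliques 2 m2) N := by
  obtain ⟨N, hN⟩ := cliqueRam_exists n2 (2 * m2)
  refine ⟨N, fun R => ?_⟩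
  rcases hN R with ⟨C, hCcard, hCred⟩ | ⟨C, hCcard, hCblue⟩
  · have e := C.orderIsoOfFin hCcard
    refine Or.inl ⟨fun i => (e i : Fin N), fun i j hij => e.injective (Subtype.ext hij), ?_⟩
    intro u v huv
    exact hCred _ (e u).2 _ (e v).2 (fun h => G.loopless.irrefl u (by
      have : u = v := e.injective (Subtype.ext h); rw [this] at huv ⊢; exact huv))
  · have e := C.orderIsoOfFin hCcard
    have hidx : ∀ p : Fin 2 × Fin m2, p.1.val * m2 + p.2.val < 2 * m2 := by
      rintro ⟨i, j⟩
      have : i.val ≤ 1 := by omega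
      have hj := j.isLt
      interval_cases h : i.val <;> omega
    set F : Fin 2 × Fin m2 → Fin N := fun p => (e ⟨p.1.val * m2 + p.2.val, hidx p⟩ : Fin N)
      with hF
    have hFinj : Function.Injective F := by
      rintro ⟨i, j⟩ ⟨i', j'⟩ h
      have h2 : (⟨i.val * m2 + j.val, hidx ⟨i,j⟩⟩ : Fin (2*m2)) = ⟨i'.val * m2 + j'.val, hidx ⟨i',j'⟩⟩ :=
        e.injective (Subtype.ext h)
      have h3 : i.val * m2 + j.val = i'.val * m2 + j'.val := by
        simpa [Fin.ext_iff] using h2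
      have hj := j.isLt; have hj' := j'.isLt
      have hi := i.isLt; have hi' := i'.isLt
      clear h h2 hF
      have : i.val = i'.val ∧ j.val = j'.val := by
        have d1 : i.val = 0 ∨ i.val = 1 := by omega
        have d2 : i'.val = 0 ∨ i'.val = 1 := by omega
        rcases d1 with h1 | h1 <;> rcases d2 with h2 | h2 <;> rw [h1, h2] at h3 <;> omega
      simp [Prod.ext_iff, Fin.ext_iff, this.1, this.2]
    refine Or.inr ⟨F, hFinj, ?_⟩
    intro u v huv
    have hne : F u ≠ F v := fun h => (kCliques 2 m2).loopless.irrefl u (by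
      have := hFinj h; rw [this] at huv ⊢; exact huv)
    exact ⟨hne, hCblue _ (e _).2 _ (e _).2 hne⟩

section TreeStuff

variable {n : ℕ} (T : SimpleGraph (Fin n)) (hT : T.IsTree)

/-- the unique path between two vertices of a tree -/
noncomputable def treePath (x y : Fin n) : T.Walk x y :=
  (hT.existsUnique_path x y).exists.choose

lemma treePath_isPath (x y : Fin n) : (treePath T hT x y).IsPath :=
  (hT.existsUnique_path x y).exists.choose_spec

lemma treePath_unique {x y : Fin n} (p : T.Walk x y) (hp : p.IsPath) :
    p = treePath T hT x y := by
  obtain ⟨q, hq, huniq⟩ := hT.existsUnique_path x y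
  rw [huniq p hp, huniq (treePath T hT x y) (treePath_isPath T hT x y)]

variable (a : Fin n)

/-- depth of x in the tree rooted at a -/
noncomputable def tdepth (x : Fin n) : ℕ := (treePath T hT x a).length

lemma tdepth_root : tdepth T hT a a = 0 := by
  have : (Walk.nil : T.Walk a a) = treePath T hT a a :=
    treePath_unique T hT _ (Walk.IsPath.nil)
  rw [tdepth, ← this]
  rfl

lemma eq_root_of_tdepth_zero {x : Fin n} (h : tdepth T hT a x = 0) : x = a :=
  Walk.eq_of_length_eq_zero h

lemma tdepth_adj {x y : Fin n} (hxy : T.Adj x y) :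
    tdepth T hT a y + 1 = tdepth T hT a x ∨ tdepth T hT a x + 1 = tdepth T hT a y := by
  set p := treePath T hT x a with hp
  by_cases hy : y ∈ p.support
  · left
    have hp1 : (p.takeUntil y hy).IsPath := (treePath_isPath T hT x a).takeUntil hy
    have hp2 : (p.dropUntil y hy).IsPath := (treePath_isPath T hT x a).dropUntil hy
    have hedge : (Walk.cons hxy Walk.nil : T.Walk x y).IsPath := by
      simp [Walk.cons_isPath_iff, hxy.ne]
    have h1 : p.takeUntil y hy = treePath T hT x y := treePath_unique T hT _ hp1
    have h2 : (Walk.cons hxy Walk.nil : T.Walk x y) = treePath T hT x y :=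
      treePath_unique T hT _ hedge
    have hlen1 : (p.takeUntil y hy).length = 1 := by
      rw [h1, ← h2]; rfl
    have h3 : p.dropUntil y hy = treePath T hT y a := treePath_unique T hT _ hp2
    have hspec := p.take_spec hy
    have := congrArg Walk.length hspec
    rw [Walk.length_append, hlen1, h3] at this
    rw [tdepth, tdepth, ← hp, ← this]
    omega
  · right
    have hcons : (Walk.cons hxy.symm p).IsPath := by
      rw [Walk.cons_isPath_iff]
      exact ⟨treePath_isPath T hT x a, hy⟩
    have := treePath_unique T hT _ hcons
    have hlen := congrArg Walk.length this
    rw [tdepth, tdepth, ← hp, ← hlen]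
    rfl

lemma parent_spec {x : Fin n} (hx : x ≠ a) :
    ∃ u, T.Adj x u ∧ tdepth T hT a u + 1 = tdepth T hT a x ∧
      (∀ v, T.Adj x v → tdepth T hT a v < tdepth T hT a x → v = u) ∧
      u ∈ (treePath T hT x a).support := by
  set p := treePath T hT x a with hp
  have hnil : ¬ p.Nil := by
    intro hnl
    exact hx (Walk.eq_of_length_eq_zero (Walk.nil_iff_length_eq.mp hnl))
  obtain ⟨u, hadj, q, hq⟩ := Walk.not_nil_iff.mp hnil
  have hqpath : q.IsPath := by
    have := treePath_isPath T hT x a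
    rw [← hp, hq, Walk.cons_isPath_iff] at this
    exact this.1
  have hqP : q = treePath T hT u a := treePath_unique T hT _ hqpath
  have hdep : tdepth T hT a u + 1 = tdepth T hT a x := by
    have : p.length = q.length + 1 := by rw [hq]; rfl
    rw [tdepth, tdepth, ← hp, this, hqP]
  refine ⟨u, hadj, hdep, ?_, ?_⟩
  · intro v hxv hvx
    -- claim x ∉ (treePath v a).support
    set r := treePath T hT v a with hr
    have hxr : x ∉ r.support := by
      intro hxr
      have hpre : (r.takeUntil x hxr).IsPath := (treePath_isPath T hT v a).takeUntil hxr
      have hdrop : r.dropUntil x hxr = treePath T hT x a :=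
        treePath_unique T hT _ ((treePath_isPath T hT v a).dropUntil hxr)
      have hprelen : 1 ≤ (r.takeUntil x hxr).length := by
        rcases Nat.eq_zero_or_pos (r.takeUntil x hxr).length with h0 | h1
        · exact absurd (Walk.eq_of_length_eq_zero h0) hxv.ne'
        · exact h1
      have hspec := congrArg Walk.length (r.take_spec hxr)
      rw [Walk.length_append, hdrop] at hspec
      have : tdepth T hT a v = (r.takeUntil x hxr).length + tdepth T hT a x := by
        rw [tdepth, ← hr, ← hspec]; rfl
      omega
    have hconsv : (Walk.cons hxv r).IsPath := by
      rw [Walk.cons_isPath_iff]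
      exact ⟨treePath_isPath T hT v a, hxr⟩
    have h1 : (Walk.cons hxv r : T.Walk x a) = treePath T hT x a := treePath_unique T hT _ hconsv
    have h2 : (Walk.cons hadj q : T.Walk x a) = treePath T hT x a := by rw [← hq, hp]
    have := h1.trans h2.symm
    have hsup := congrArg Walk.support this
    rw [Walk.support_cons, Walk.support_cons, r.support_eq_cons, q.support_eq_cons] at hsup
    simp only [List.cons.injEq] at hsup
    exact hsup.2.1
  · rw [hq, Walk.support_cons]
    exact List.mem_cons_of_mem _ (q.start_mem_support)

end TreeStuff

section TreeStuff2

variable {n : ℕ} {T : SimpleGraph (Fin n)} {b : Fin n}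

/-- a path between two non-`b` vertices avoids the leaf `b` -/
lemma path_avoids_leaf (hb : IsLeaf T b) :
    ∀ {x y : Fin n} (p : T.Walk x y), p.IsPath → x ≠ b → y ≠ b → b ∉ p.support := by
  obtain ⟨c, hc, hcuniq⟩ := hb
  intro x y p
  induction p with
  | nil =>
    intro _ hx _
    simpa using fun h => hx h.symm
  | @cons x x' y h q ih =>
    intro hp hx hy
    have hq : q.IsPath := hp.of_cons
    have hxq : x ∉ q.support := ((Walk.cons_isPath_iff h q).mp hp).2
    rw [Walk.support_cons]
    intro hmem
    rcases List.mem_cons.mp hmem with hxb | hbq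
    · exact hx hxb.symm
    · by_cases hx'b : x' = b
      · subst hx'b
        -- q : b → y, y ≠ b so q = cons, both neighbors = c
        have hnil : ¬ q.Nil := by
          intro hnl
          exact hy (Walk.eq_of_length_eq_zero (Walk.nil_iff_length_eq.mp hnl)).symm
        obtain ⟨w, hw, q2, hq2⟩ := Walk.not_nil_iff.mp hnil
        have hxc : x = c := hcuniq x (h.symm)
        have hwc : w = c := hcuniq w hw
        have hxw : x = w := by rw [hxc, hwc]
        have : x ∈ q.support := by
          rw [hq2, Walk.support_cons]
          exact List.mem_cons_of_mem _ (hxw ▸ q2.start_mem_support)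
        exact hxq this
      · exact (ih hq hx'b hy) hbq

/-- the stretched graph is a tree -/
lemma stretch_isTree {T' : SimpleGraph (Fin n)} {a : Fin n}
    (hT : T.IsTree) (hab : a ≠ b) (hb : IsLeaf T b)
    (hadj : ∀ x y, T'.Adj x y ↔
      ((T.Adj x y ∧ x ≠ b ∧ y ≠ b) ∨ (x = b ∧ y = a) ∨ (x = a ∧ y = b))) :
    T'.IsTree := by
  have hTadj : ∀ {x y : Fin n}, T.Adj x y → x ≠ b → y ≠ b → T'.Adj x y := by
    intro x y h hx hy
    rw [hadj]
    exact Or.inl ⟨h, hx, hy⟩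
  have hba : T'.Adj b a := by rw [hadj]; right; left; exact ⟨rfl, rfl⟩
  have hbnbr : ∀ {y : Fin n}, T'.Adj b y → y = a := by
    intro y h
    rw [hadj] at h
    rcases h with ⟨_, h2, _⟩ | ⟨_, h2⟩ | ⟨h1, _⟩
    · exact absurd rfl h2
    · exact h2
    · exact absurd h1.symm hab
  constructor
  · -- connected
    rw [connected_iff]
    refine ⟨?_, ⟨a⟩⟩
    have lift : ∀ {x y : Fin n} (p : T.Walk x y), b ∉ p.support → T'.Reachable x y := by
      intro x y p
      induction p with
      | nil => exact fun _ => Reachable.refl _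
      | @cons u u' v h q ih =>
        intro hbp
        rw [Walk.support_cons] at hbp
        have hu : u ≠ b := fun he => hbp (by rw [he]; exact List.mem_cons_self)
        have hu' : u' ∈ q.support := q.start_mem_support
        have hbq : b ∉ q.support := fun hm => hbp (List.mem_cons_of_mem _ hm)
        have hu'b : u' ≠ b := fun he => hbq (by rw [← he]; exact hu')
        exact (hTadj h hu hu'b).reachable.trans (ih hbq)
    have key : ∀ x : Fin n, T'.Reachable x a := by
      intro x
      by_cases hxb : x = b
      · subst hxb; exact hba.reachable
      · obtain ⟨p, hp⟩ := hT.existsUnique_path x a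
        exact lift p (path_avoids_leaf hb p hp.1 hxb hab)
    intro x y
    exact (key x).trans (key y).symm
  · -- acyclic
    intro v c hc
    by_cases hbc : b ∈ c.support
    · -- rotate to start at b
      have hc' : (c.rotate b hbc).IsCycle := hc.rotate hbc
      set d := c.rotate b hbc with hd
      have hnil : ¬ d.Nil := hc'.not_nil
      obtain ⟨u, hu, q, hq⟩ := Walk.not_nil_iff.mp hnil
      have hua : u = a := hbnbr hu
      have hqpath : q.IsPath := by
        have h3 := hc'.2
        rw [hq, Walk.support_cons, List.tail_cons] at h3
        have htrail : q.IsTrail := by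
          have := hc'.1.1
          rw [hq] at this
          exact this.of_cons
        exact ⟨htrail, h3⟩
      -- q : u = a → b; q.reverse : b → a
      have hqrev : q.reverse.IsPath := hqpath.reverse
      have hnil2 : ¬ q.reverse.Nil := by
        intro hnl
        have : b = u := Walk.eq_of_length_eq_zero (Walk.nil_iff_length_eq.mp hnl)
        rw [hua] at this
        exact hab this.symm
      obtain ⟨w, hw, r, hr⟩ := Walk.not_nil_iff.mp hnil2
      have hwa : w = a := hbnbr hw
      -- r : w = a → u = a, a path, so nil
      subst hua hwa
      have hrpath : r.IsPath := by
        have := hqrev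
        rw [hr] at this
        exact this.of_cons
      have hrnil : r = Walk.nil := (Walk.isPath_iff_eq_nil (p := r)).mp hrpath
      -- then q.reverse has length 1, so c has length 2 < 3
      have hlq : q.reverse.length = 1 := by rw [hr, hrnil]; rfl
      have hld : d.length = 2 := by
        have : d.length = q.length + 1 := by rw [hq]; rfl
        rw [Walk.length_reverse] at hlq
        omega
      have := hc'.three_le_length
      omega
    · -- cycle avoids b: transfer to T
      have hedges : ∀ e ∈ c.edges, e ∈ T.edgeSet := by
        intro e he
        induction e with
        | h x y =>
          have hx : x ∈ c.support := c.fst_mem_support_of_mem_edges he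
          have hy : y ∈ c.support := c.snd_mem_support_of_mem_edges he
          have hadj' : T'.Adj x y := c.adj_of_mem_edges he
          rw [hadj] at hadj'
          rcases hadj' with ⟨h1, _, _⟩ | ⟨h1, _⟩ | ⟨_, h2⟩
          · exact h1
          · exact absurd (h1 ▸ hx) hbc
          · exact absurd (h2 ▸ hy) hbc
      have := (hc.transfer hedges)
      exact hT.IsAcyclic _ this

end TreeStuff2

section Greedy

variable {n L : ℕ} (R : SimpleGraph (Fin L))
  (Tadj : Fin n → Fin n → Prop)
  (ord : Fin n → ℕ)
  (vset : Finset (Fin n))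

/-- greedy embedding of a forest-with-elimination-order into a graph of min degree ≥ k-1 -/
lemma greedy_embed (k : ℕ)
    (hsymm : ∀ x y, Tadj x y → Tadj y x)
    (hirr : ∀ x, ¬ Tadj x x)
    (hordinj : ∀ x y, ord x = ord y → x = y)
    (hpar : ∀ x ∈ vset, ∀ y ∈ vset, ∀ z ∈ vset, Tadj x y → Tadj x z →
      ord y < ord x → ord z < ord x → y = z)
    (hk : vset.card = k) (W : Finset (Fin L))
    (hdeg : ∀ w ∈ W, k - 1 ≤ (W.filter (fun z => R.Adj w z)).card)
    (hW0 : W.Nonempty)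
    (hWk : k ≤ W.card) :
    ∃ h : Fin n → Fin L, (∀ x ∈ vset, ∀ y ∈ vset, h x = h y → x = y) ∧
      (∀ x ∈ vset, h x ∈ W) ∧
      (∀ x ∈ vset, ∀ y ∈ vset, Tadj x y → R.Adj (h x) (h y)) := by
  have main : ∀ t : ℕ, ∃ h : Fin n → Fin L,
      (∀ x ∈ vset.filter (fun z => ord z < t), ∀ y ∈ vset.filter (fun z => ord z < t),
        h x = h y → x = y) ∧
      (∀ x ∈ vset.filter (fun z => ord z < t), h x ∈ W) ∧
      (∀ x ∈ vset.filter (fun z => ord z < t), ∀ y ∈ vset.filter (fun z => ord z < t),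
        Tadj x y → R.Adj (h x) (h y)) := by
    intro t
    induction t with
    | zero =>
      refine ⟨fun _ => hW0.choose, ?_, ?_, ?_⟩ <;> intro x hx <;> simp at hx
    | succ t ih =>
      obtain ⟨h, hinj, hmem, hadj⟩ := ih
      by_cases hex : ∃ x ∈ vset, ord x = t
      · obtain ⟨x, hxv, hxt⟩ := hex
        set D := vset.filter (fun z => ord z < t) with hD
        have hxD : x ∉ D := by
          simp only [hD, Finset.mem_filter]
          rintro ⟨_, h2⟩
          omega
        have hDsub : D ⊆ vset.erase x := by
          intro y hy
          simp only [hD, Finset.mem_filter] at hy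
          refine Finset.mem_erase.mpr ⟨?_, hy.1⟩
          intro he
          subst he
          omega
        have hDcard : D.card ≤ k - 1 := by
          have h1 := Finset.card_le_card hDsub
          have h2 : (vset.erase x).card = k - 1 := by
            rw [Finset.card_erase_of_mem hxv, hk]
          omega
        have hDk : 1 ≤ k := by
          have := Finset.card_le_card (Finset.singleton_subset_iff.mpr hxv)
          simp [hk] at this
          omega
        -- choose the image v* of x
        have hchoice : ∃ v : Fin L, v ∈ W ∧ (∀ y ∈ D, h y ≠ v) ∧
            (∀ y ∈ D, Tadj x y → R.Adj (h y) v) := by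
          by_cases hpn : ∃ y ∈ D, Tadj x y
          · obtain ⟨p, hpD, hpadj⟩ := hpn
            have hponly : ∀ y ∈ D, Tadj x y → y = p := by
              intro y hyD hyadj
              have hyv : y ∈ vset := (Finset.mem_filter.mp hyD).1
              have hpv : p ∈ vset := (Finset.mem_filter.mp hpD).1
              have hyo : ord y < ord x := by
                have := (Finset.mem_filter.mp hyD).2; omega
              have hpo : ord p < ord x := by
                have := (Finset.mem_filter.mp hpD).2; omega
              exact hpar x hxv y hyv p hpv hyadj hpadj hyo hpo
            have hfp : h p ∈ W := hmem p hpD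
            have hfil1 : k - 1 ≤ (W.filter (fun z => R.Adj (h p) z)).card := hdeg _ hfp
            have h1 : (D.image h).card ≤ D.card := Finset.card_image_le
            have h2 : ((D.image h).erase (h p)).card = (D.image h).card - 1 :=
              Finset.card_erase_of_mem (Finset.mem_image_of_mem h hpD)
            have h2b : 1 ≤ (D.image h).card :=
              Finset.card_pos.mpr ⟨h p, Finset.mem_image_of_mem h hpD⟩
            have h0 : 1 ≤ D.card := Finset.card_pos.mpr ⟨p, hpD⟩
            have hnsub : ¬ (W.filter (fun z => R.Adj (h p) z)) ⊆ ((D.image h).erase (h p)) := by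
              intro hsub
              have := Finset.card_le_card hsub
              omega
            obtain ⟨v, hvfil, hvimg⟩ := Finset.not_subset.mp hnsub
            rw [Finset.mem_filter] at hvfil
            refine ⟨v, hvfil.1, ?_, ?_⟩
            · intro y hyD he
              apply hvimg
              rw [Finset.mem_erase]
              refine ⟨?_, ?_⟩
              · intro hvp
                rw [hvp] at hvfil
                exact R.loopless.irrefl _ hvfil.2
              · rw [← he]
                exact Finset.mem_image_of_mem h hyD
            · intro y hyD hyadj
              rw [hponly y hyD hyadj]
              exact hvfil.2
          · -- no neighbor among already-embedded
            have h1 : (D.image h).card ≤ D.card := Finset.card_image_le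
            have hnsub : ¬ W ⊆ D.image h := by
              intro hsub
              have := Finset.card_le_card hsub
              omega
            obtain ⟨v, hv1, hv2⟩ := Finset.not_subset.mp hnsub
            refine ⟨v, hv1, ?_, ?_⟩
            · intro y hyD he
              exact hv2 (by rw [← he]; exact Finset.mem_image_of_mem h hyD)
            · intro y hyD hyadj
              exact absurd ⟨y, hyD, hyadj⟩ hpn
        obtain ⟨v, hvW, hvfresh, hvadj⟩ := hchoice
        set h' := Function.update h x v with hh'
        have hDt1 : vset.filter (fun z => ord z < t + 1) = insert x D := by
          ext y
          simp only [Finset.mem_filter, Finset.mem_insert, hD]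
          constructor
          · rintro ⟨hy1, hy2⟩
            by_cases hyx : y = x
            · exact Or.inl hyx
            · right
              refine ⟨hy1, ?_⟩
              have : ord y ≠ t := by
                intro he
                exact hyx (hordinj y x (he.trans hxt.symm))
              omega
          · rintro (rfl | ⟨hy1, hy2⟩)
            · exact ⟨hxv, by omega⟩
            · exact ⟨hy1, by omega⟩
        have hup : ∀ y ∈ D, h' y = h y := by
          intro y hyD
          rw [hh', Function.update_of_ne (by rintro rfl; exact hxD hyD)]
        have hux : h' x = v := by rw [hh']; simp
        refine ⟨h', ?_, ?_, ?_⟩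
        · intro z hz w hw he
          rw [hDt1] at hz hw
          rcases Finset.mem_insert.mp hz with hzx | hzD
          · rcases Finset.mem_insert.mp hw with hwx | hwD
            · rw [hzx, hwx]
            · subst hzx
              rw [hux, hup w hwD] at he
              exact absurd he.symm (hvfresh w hwD)
          · rcases Finset.mem_insert.mp hw with hwx | hwD
            · subst hwx
              rw [hux, hup z hzD] at he
              exact absurd he (hvfresh z hzD)
            · rw [hup z hzD, hup w hwD] at he
              exact hinj z hzD w hwD he
        · intro z hz
          rw [hDt1] at hz
          rcases Finset.mem_insert.mp hz with rfl | hz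
          · rw [hux]; exact hvW
          · rw [hup z hz]; exact hmem z hz
        · intro z hz w hw hzw
          rw [hDt1] at hz hw
          rcases Finset.mem_insert.mp hz with hzx | hzD
          · rcases Finset.mem_insert.mp hw with hwx | hwD
            · subst hzx; subst hwx
              exact absurd hzw (hirr _)
            · subst hzx
              rw [hux, hup w hwD]
              exact (hvadj w hwD hzw).symm
          · rcases Finset.mem_insert.mp hw with hwx | hwD
            · subst hwx
              rw [hux, hup z hzD]
              exact hvadj z hzD (hsymm _ _ hzw)
            · rw [hup z hzD, hup w hwD]
              exact hadj z hzD w hwD hzw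
      · -- no vertex at this time step
        push_neg at hex
        have : vset.filter (fun z => ord z < t + 1) = vset.filter (fun z => ord z < t) := by
          ext y
          simp only [Finset.mem_filter]
          constructor
          · rintro ⟨h1, h2⟩
            refine ⟨h1, ?_⟩
            have := hex y h1
            omega
          · rintro ⟨h1, h2⟩
            exact ⟨h1, by omega⟩
        rw [this]
        exact ⟨h, hinj, hmem, hadj⟩
  -- take t large enough
  obtain ⟨t, ht⟩ : ∃ t : ℕ, ∀ x ∈ vset, ord x < t := by
    refine ⟨(vset.image ord).sup id + 1, fun x hx => ?_⟩
    have : ord x ≤ (vset.image ord).sup id :=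
      Finset.le_sup (f := id) (Finset.mem_image_of_mem ord hx)
    omega
  obtain ⟨h, hinj, hmem, hadj⟩ := main t
  have heq : vset.filter (fun z => ord z < t) = vset := by
    apply Finset.filter_true_of_mem
    intro x hx
    exact ht x hx
  rw [heq] at hinj hmem hadj
  exact ⟨h, hinj, hmem, hadj⟩

end Greedy

section Chvatal

variable {n L : ℕ} (R : SimpleGraph (Fin L))
  (Tadj : Fin n → Fin n → Prop)
  (ord : Fin n → ℕ)
  (vset : Finset (Fin n))

lemma chvatal_embed (k : ℕ)
    (hsymm : ∀ x y, Tadj x y → Tadj y x)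
    (hirr : ∀ x, ¬ Tadj x x)
    (hordinj : ∀ x y, ord x = ord y → x = y)
    (hpar : ∀ x ∈ vset, ∀ y ∈ vset, ∀ z ∈ vset, Tadj x y → Tadj x z →
      ord y < ord x → ord z < ord x → y = z)
    (hk : vset.card = k) :
    ∀ (m : ℕ) (W : Finset (Fin L)),
    (¬ ∃ C : Finset (Fin L), C ⊆ W ∧ C.card = m ∧ (∀ x ∈ C, ∀ y ∈ C, x ≠ y → ¬ R.Adj x y)) →
    ((k-1) * (m-1) + 1 ≤ W.card) →
    ∃ h : Fin n → Fin L, (∀ x ∈ vset, ∀ y ∈ vset, h x = h y → x = y) ∧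
      (∀ x ∈ vset, h x ∈ W) ∧
      (∀ x ∈ vset, ∀ y ∈ vset, Tadj x y → R.Adj (h x) (h y)) := by
  intro m
  induction m with
  | zero =>
    intro W hnoC _
    exact absurd ⟨∅, Finset.empty_subset W, rfl, by simp⟩ hnoC
  | succ m ih =>
    intro W hnoC hcard
    rcases Nat.eq_zero_or_pos m with rfl | hm
    · -- m+1 = 1 : no single vertex possible, contradiction
      exfalso
      have hW0 : 0 < W.card := by simpa using hcard
      obtain ⟨w, hw⟩ := Finset.card_pos.mp hW0
      refine hnoC ⟨{w}, Finset.singleton_subset_iff.mpr hw, rfl, ?_⟩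
      intro x hx y hy hxy
      rw [Finset.mem_singleton] at hx hy
      exact absurd (hx.trans hy.symm) hxy
    · have hmm : (k - 1) * m + 1 ≤ W.card := by simpa using hcard
      have hmul : (k-1) * m = (k-1)*(m-1) + (k-1) := by
        have : m - 1 + 1 = m := Nat.succ_pred_eq_of_pos hm
        calc (k-1) * m = (k-1) * ((m-1)+1) := by rw [this]
        _ = (k-1)*(m-1) + (k-1) := by ring
      by_cases hlow : ∃ w ∈ W, (W.filter (fun z => R.Adj w z)).card < k - 1
      · obtain ⟨w, hwW, hlw⟩ := hlow
        set W' := W.filter (fun z => z ≠ w ∧ ¬ R.Adj w z) with hW'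
        have hsub : W ⊆ insert w ((W.filter (fun z => R.Adj w z)) ∪ W') := by
          intro z hz
          rw [Finset.mem_insert]
          by_cases hzw : z = w
          · exact Or.inl hzw
          · right
            rw [Finset.mem_union]
            by_cases hadj : R.Adj w z
            · exact Or.inl (Finset.mem_filter.mpr ⟨hz, hadj⟩)
            · exact Or.inr (Finset.mem_filter.mpr ⟨hz, hzw, hadj⟩)
        have hcard' : (k-1) * (m-1) + 1 ≤ W'.card := by
          have h1 := Finset.card_le_card hsub
          have h2 := Finset.card_insert_le w ((W.filter (fun z => R.Adj w z)) ∪ W')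
          have h3 := Finset.card_union_le (W.filter (fun z => R.Adj w z)) W'
          omega
        have hnoC' : ¬ ∃ C : Finset (Fin L), C ⊆ W' ∧ C.card = m ∧
            (∀ x ∈ C, ∀ y ∈ C, x ≠ y → ¬ R.Adj x y) := by
          rintro ⟨C, hCsub, hCcard, hCblue⟩
          have hwC : w ∉ C := by
            intro hwc
            have := hCsub hwc
            rw [hW', Finset.mem_filter] at this
            exact this.2.1 rfl
          refine hnoC ⟨insert w C, ?_, ?_, ?_⟩
          · intro z hz
            rcases Finset.mem_insert.mp hz with rfl | hz
            · exact hwW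
            · exact (Finset.filter_subset _ W) (hCsub hz)
          · rw [Finset.card_insert_of_notMem hwC, hCcard]
          · intro x hx y hy hxy
            rcases Finset.mem_insert.mp hx with hxw | hxC
            · rcases Finset.mem_insert.mp hy with hyw | hyC
              · exact absurd (hxw.trans hyw.symm) hxy
              · subst hxw
                have := hCsub hyC
                rw [hW', Finset.mem_filter] at this
                exact this.2.2
            · rcases Finset.mem_insert.mp hy with hyw | hyC
              · subst hyw
                have := hCsub hxC
                rw [hW', Finset.mem_filter] at this
                exact fun hadj => this.2.2 hadj.symm
              · exact hCblue x hxC y hyC hxy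
        obtain ⟨h, h1, h2, h3⟩ := ih W' hnoC' hcard'
        exact ⟨h, h1, fun x hx => (Finset.filter_subset _ W) (h2 x hx), h3⟩
      · push_neg at hlow
        have hk1 : 1 ≤ (k-1) * m + 1 := by omega
        have hW0 : W.Nonempty := Finset.card_pos.mp (by omega)
        have hWk : k ≤ W.card := by
          have : (k-1) * 1 ≤ (k-1) * m := Nat.mul_le_mul_left _ hm
          omega
        exact greedy_embed R Tadj ord vset k hsymm hirr hordinj hpar hk W hlow hW0 hWk

end Chvatal


lemma build_two_cliques {L m : ℕ} (R : SimpleGraph (Fin L)) (cA cB : Fin m → Fin L)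
    (hA1 : ∀ j j', j ≠ j' → cA j ≠ cA j' ∧ ¬ R.Adj (cA j) (cA j'))
    (hB1 : ∀ j j', j ≠ j' → cB j ≠ cB j' ∧ ¬ R.Adj (cB j) (cB j'))
    (hcross : ∀ j j', cA j ≠ cB j') :
    graphEmbeds (kCliques 2 m) Rᶜ := by
  refine ⟨fun p => if p.1.val = 0 then cA p.2 else cB p.2, ?_, ?_⟩
  · rintro ⟨i, j⟩ ⟨i', j'⟩ he
    dsimp only at he
    have hii : i = i' := by
      by_cases h0 : i.val = 0 <;> by_cases h0' : i'.val = 0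
      · apply Fin.ext; omega
      · rw [if_pos h0, if_neg h0'] at he
        exact absurd he (hcross j j')
      · rw [if_neg h0, if_pos h0'] at he
        exact absurd he.symm (hcross j' j)
      · apply Fin.ext
        have := i.isLt; have := i'.isLt
        omega
    subst hii
    have hjj : j = j' := by
      by_contra hjj
      by_cases h0 : i.val = 0
      · rw [if_pos h0, if_pos h0] at he
        exact (hA1 j j' hjj).1 he
      · rw [if_neg h0, if_neg h0] at he
        exact (hB1 j j' hjj).1 he
    rw [hjj]
  · rintro ⟨i, j⟩ ⟨i', j'⟩ hadj
    obtain ⟨h1, h2⟩ := (show (i, j).1 = (i', j').1 ∧ (i, j).2 ≠ (i', j').2 from hadj)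
    dsimp only at h1 h2
    subst h1
    rw [SimpleGraph.compl_adj]
    dsimp only
    by_cases h0 : i.val = 0
    · simp only [if_pos h0]
      exact ⟨(hA1 j j' h2).1, (hA1 j j' h2).2⟩
    · simp only [if_neg h0]
      exact ⟨(hB1 j j' h2).1, (hB1 j j' h2).2⟩

/-- Stretching preserves `2K_m`-goodness (Lemma 2.1). -/
theorem stmt_5 (n m : ℕ) (hn : 3 ≤ n) (hm : 2 ≤ m)
    (hInd : ∀ T : SimpleGraph (Fin n), T.IsTree →
      ramsey T (kCliques 2 (m - 1)) ≤ (n - 1) * (m - 2) + 2)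
    (Tstar Tstarstar : SimpleGraph (Fin n)) (hT : Tstar.IsTree)
    (hS : isStretch Tstar Tstarstar)
    (hR : ramsey Tstar (kCliques 2 m) ≤ (n - 1) * (m - 1) + 2) :
    ramsey Tstarstar (kCliques 2 m) ≤ (n - 1) * (m - 1) + 2 := by
  obtain ⟨a, b, hab, hla, hlb, hadj⟩ := hS
  have hTT : Tstarstar.IsTree := stretch_isTree hT hab hlb hadj
  obtain ⟨N1, hN1⟩ := exists_isRamsey_kCliques n m Tstar
  obtain ⟨N2, hN2⟩ := exists_isRamsey_kCliques n (m-1) Tstarstar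
  have hRam1 : isRamsey Tstar (kCliques 2 m) ((n-1)*(m-1)+2) :=
    isRamsey_of_ramsey_le _ _ ⟨N1, hN1⟩ hR
  have hRam2 : isRamsey Tstarstar (kCliques 2 (m-1)) ((n-1)*(m-2)+2) :=
    isRamsey_of_ramsey_le _ _ ⟨N2, hN2⟩ (hInd Tstarstar hTT)
  apply Nat.sInf_le
  show isRamsey Tstarstar (kCliques 2 m) ((n-1)*(m-1)+2)
  intro R
  rcases hRam1 R with ⟨f, hfinj, hfadj⟩ | hblue
  case inr => exact Or.inr hblue
  -- depth machinery on Tstar rooted at a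
  have hdep_adj : ∀ {x y}, Tstar.Adj x y →
      tdepth Tstar hT a y + 1 = tdepth Tstar hT a x ∨
      tdepth Tstar hT a x + 1 = tdepth Tstar hT a y :=
    fun hxy => tdepth_adj Tstar hT a hxy
  -- choose the leaf ℓ of T0 = Tstar - b of maximal depth
  obtain ⟨l, hlS0, hlmax⟩ := Finset.exists_max_image (Finset.univ.erase b) (tdepth Tstar hT a)
    ⟨a, Finset.mem_erase.mpr ⟨hab, Finset.mem_univ a⟩⟩
  have hlb' : l ≠ b := (Finset.mem_erase.mp hlS0).1
  have hx3 : ∃ x : Fin n, x ≠ a ∧ x ≠ b := by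
    by_contra hc
    push_neg at hc
    have hsub : (Finset.univ : Finset (Fin n)) ⊆ {a, b} := by
      intro x _
      by_cases hxa : x = a
      · simp [hxa]
      · simp [hc x hxa]
    have h1 := Finset.card_le_card hsub
    have h2 : ({a, b} : Finset (Fin n)).card ≤ 2 := by
      have := Finset.card_insert_le a ({b} : Finset (Fin n))
      simpa using this
    rw [Finset.card_univ, Fintype.card_fin] at h1
    omega
  obtain ⟨x0, hx0a, hx0b⟩ := hx3
  have hx0dep : 0 < tdepth Tstar hT a x0 :=
    Nat.pos_of_ne_zero (fun h0 => hx0a (eq_root_of_tdepth_zero Tstar hT a h0))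
  have hldep : 0 < tdepth Tstar hT a l :=
    lt_of_lt_of_le hx0dep (hlmax x0 (Finset.mem_erase.mpr ⟨hx0b, Finset.mem_univ x0⟩))
  have hla' : l ≠ a := by
    intro h
    rw [h, tdepth_root] at hldep
    omega
  obtain ⟨l', hll', hl'dep, hl'uniq, hl'sup⟩ := parent_spec Tstar hT a hla'
  have hl'b : l' ≠ b := by
    have hbavoid : b ∉ (treePath Tstar hT l a).support :=
      path_avoids_leaf hlb _ (treePath_isPath Tstar hT l a) hlb' hab
    intro h
    exact hbavoid (h ▸ hl'sup)
  have hl'l : l' ≠ l := fun h => Tstar.loopless.irrefl l (h ▸ hll')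
  have hleafT0 : ∀ y, y ≠ b → Tstar.Adj l y → y = l' := by
    intro y hyb hy
    have hyd := hdep_adj hy
    have hmax := hlmax y (Finset.mem_erase.mpr ⟨hyb, Finset.mem_univ y⟩)
    exact hl'uniq y hy (by omega)
  -- the vertex set of T2 and the elimination order
  set V2 : Finset (Fin n) := (Finset.univ.erase b).erase l with hV2
  have hmemV2 : ∀ x : Fin n, x ≠ b → x ≠ l → x ∈ V2 := fun x h1 h2 =>
    Finset.mem_erase.mpr ⟨h2, Finset.mem_erase.mpr ⟨h1, Finset.mem_univ x⟩⟩
  have haV2 : a ∈ V2 := hmemV2 a hab (fun h => hla' h.symm)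
  have hl'V2 : l' ∈ V2 := hmemV2 l' hl'b hl'l
  have hV2card : V2.card = n - 2 := by
    rw [hV2, Finset.card_erase_of_mem (Finset.mem_erase.mpr ⟨hlb', Finset.mem_univ l⟩),
      Finset.card_erase_of_mem (Finset.mem_univ b), Finset.card_univ, Fintype.card_fin]
    omega
  have hn0 : 0 < n := by omega
  have hordinj : ∀ x y : Fin n,
      n * tdepth Tstar hT a x + x.val = n * tdepth Tstar hT a y + y.val → x = y := by
    intro x y he
    have hx := x.isLt
    have hy := y.isLt
    have hdd : tdepth Tstar hT a x = tdepth Tstar hT a y := by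
      rcases lt_trichotomy (tdepth Tstar hT a x) (tdepth Tstar hT a y) with h | h | h
      · have h2 : n * (tdepth Tstar hT a x + 1) ≤ n * tdepth Tstar hT a y :=
          Nat.mul_le_mul_left n (Nat.succ_le_of_lt h)
        rw [Nat.mul_succ] at h2
        omega
      · exact h
      · have h2 : n * (tdepth Tstar hT a y + 1) ≤ n * tdepth Tstar hT a x :=
          Nat.mul_le_mul_left n (Nat.succ_le_of_lt h)
        rw [Nat.mul_succ] at h2
        omega
    apply Fin.ext
    rw [hdd] at he
    omega
  have hpar : ∀ x ∈ V2, ∀ y ∈ V2, ∀ z ∈ V2, Tstar.Adj x y → Tstar.Adj x z →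
      (n * tdepth Tstar hT a y + y.val < n * tdepth Tstar hT a x + x.val) →
      (n * tdepth Tstar hT a z + z.val < n * tdepth Tstar hT a x + x.val) → y = z := by
    intro x _ y _ z _ hxy hxz hyx hzx
    have hx := x.isLt
    have hdlt : ∀ w : Fin n, Tstar.Adj x w →
        n * tdepth Tstar hT a w + w.val < n * tdepth Tstar hT a x + x.val →
        tdepth Tstar hT a w < tdepth Tstar hT a x := by
      intro w hxw hwlt
      rcases hdep_adj hxw with h | h
      · omega
      · exfalso
        have h2 : n * tdepth Tstar hT a w = n * tdepth Tstar hT a x + n := by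
          rw [← h, Nat.mul_succ]
        omega
    have hya := hdlt y hxy hyx
    have hza := hdlt z hxz hzx
    have hxa : x ≠ a := by
      intro h
      rw [h, tdepth_root] at hya
      omega
    obtain ⟨u, _, _, huniq, _⟩ := parent_spec Tstar hT a hxa
    rw [huniq y hxy hya, huniq z hxz hza]
  -- the complement A of the image of T0
  have himgcard : ((Finset.univ.erase b).image f).card = n - 1 := by
    rw [Finset.card_image_of_injective _ hfinj,
      Finset.card_erase_of_mem (Finset.mem_univ b), Finset.card_univ, Fintype.card_fin]
  have hAcard : (((Finset.univ.erase b).image f)ᶜ : Finset (Fin ((n-1)*(m-1)+2))).card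
      = (n-1)*(m-2)+2 := by
    rw [Finset.card_compl, himgcard, Fintype.card_fin]
    have h1 : (n-1)*(m-1) = (n-1)*(m-2) + (n-1) := by
      have h0 : m - 2 + 1 = m - 1 := by omega
      rw [← h0]
      ring
    omega
  have hfaimg : f a ∈ (Finset.univ.erase b).image f :=
    Finset.mem_image_of_mem f (Finset.mem_erase.mpr ⟨hab, Finset.mem_univ a⟩)
  by_cases hext : ∃ v ∈ (((Finset.univ.erase b).image f)ᶜ : Finset (Fin ((n-1)*(m-1)+2))),
      R.Adj (f a) v
  · -- extend the tree by a pendant at (f a): red T**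
    obtain ⟨v, hvA, hvadj⟩ := hext
    have hvnotimg : v ∉ (Finset.univ.erase b).image f := Finset.mem_compl.mp hvA
    refine Or.inl ⟨fun x => if x = b then v else f x, ?_, ?_⟩
    · intro x y he
      dsimp only at he
      by_cases hxb : x = b <;> by_cases hyb : y = b
      · rw [hxb, hyb]
      · rw [if_pos hxb, if_neg hyb] at he
        exact absurd (he ▸ Finset.mem_image_of_mem f
          (Finset.mem_erase.mpr ⟨hyb, Finset.mem_univ y⟩)) hvnotimg
      · rw [if_neg hxb, if_pos hyb] at he
        exact absurd (he ▸ Finset.mem_image_of_mem f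
          (Finset.mem_erase.mpr ⟨hxb, Finset.mem_univ x⟩) : v ∈ _) hvnotimg
      · rw [if_neg hxb, if_neg hyb] at he
        exact hfinj he
    · intro x y hxy
      rw [hadj] at hxy
      dsimp only
      rcases hxy with ⟨h1, hx, hy⟩ | ⟨hx, hy⟩ | ⟨hx, hy⟩
      · rw [if_neg hx, if_neg hy]
        exact hfadj x y h1
      · have hyb : ¬ (y = b) := fun hc => hab (hy.symm.trans hc)
        rw [if_pos hx, if_neg hyb, hy]
        exact hvadj.symm
      · have hxb : ¬ (x = b) := fun hc => hab (hx.symm.trans hc)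
        rw [if_neg hxb, if_pos hy, hx]
        exact hvadj
  · push_neg at hext
    -- apply the induction hypothesis inside A
    have hAeq := Finset.equivFinOfCardEq hAcard
    set ι : Fin ((n-1)*(m-2)+2) → Fin ((n-1)*(m-1)+2) := fun i => (hAeq.symm i : Fin _) with hι
    have hιinj : Function.Injective ι := by
      intro i j hij
      have := hAeq.symm.injective (Subtype.ext hij)
      exact this
    have hιA : ∀ i, ι i ∈ (((Finset.univ.erase b).image f)ᶜ : Finset (Fin ((n-1)*(m-1)+2))) :=
      fun i => (hAeq.symm i).2
    rcases hRam2 (R.comap ι) with ⟨g, hginj, hgadj⟩ | ⟨e2, he2inj, he2adj⟩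
    · exact Or.inl ⟨fun x => ι (g x), fun x y he => hginj (hιinj he),
        fun x y hxy => hgadj x y hxy⟩
    -- blue 2 K_{m-1} inside A; B i j are its vertices
    set B : Fin 2 → Fin (m-1) → Fin ((n-1)*(m-1)+2) := fun i j => ι (e2 (i, j)) with hB
    have hBA : ∀ i j, B i j ∈ (((Finset.univ.erase b).image f)ᶜ :
        Finset (Fin ((n-1)*(m-1)+2))) := fun i j => hιA _
    have hBinj : ∀ i j i' j', B i j = B i' j' → i = i' ∧ j = j' := by
      intro i j i' j' he
      have h2 := he2inj (hιinj he)
      exact ⟨congrArg Prod.fst h2, congrArg Prod.snd h2⟩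
    have hBblue : ∀ i j j', j ≠ j' → ¬ R.Adj (B i j) (B i j') := by
      intro i j j' hjj hradj
      have h2 := he2adj (i,j) (i,j') (show (i,j).1 = (i,j').1 ∧ (i,j).2 ≠ (i,j').2 from ⟨rfl, by simpa using hjj⟩)
      rw [SimpleGraph.compl_adj] at h2
      exact h2.2 hradj
    have hfaB : ∀ i j, ¬ R.Adj (f a) (B i j) := fun i j => hext _ (hBA i j)
    have hfaBne : ∀ i j, f a ≠ B i j := by
      intro i j he
      exact (Finset.mem_compl.mp (hBA i j)) (he ▸ hfaimg)
    -- the bad set and its complement U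
    have hfanotim : f a ∉ Finset.univ.image (fun p : Fin 2 × Fin (m-1) => B p.1 p.2) := by
      intro hmem
      obtain ⟨p, _, hp⟩ := Finset.mem_image.mp hmem
      exact hfaBne p.1 p.2 hp.symm
    have hBglobinj : Function.Injective (fun p : Fin 2 × Fin (m-1) => B p.1 p.2) := by
      rintro ⟨i, j⟩ ⟨i', j'⟩ he
      obtain ⟨h1, h2⟩ := hBinj i j i' j' he
      rw [Prod.ext_iff]
      exact ⟨h1, h2⟩
    set bad : Finset (Fin ((n-1)*(m-1)+2)) :=
      insert (f a) (Finset.univ.image (fun p : Fin 2 × Fin (m-1) => B p.1 p.2)) with hbad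
    have hbadcard : bad.card = 2*(m-1)+1 := by
      rw [hbad, Finset.card_insert_of_notMem hfanotim,
        Finset.card_image_of_injective _ hBglobinj, Finset.card_univ]
      simp [Fintype.card_prod]
    have hBbad : ∀ i j, B i j ∈ bad := fun i j =>
      Finset.mem_insert_of_mem (Finset.mem_image.mpr ⟨(i,j), Finset.mem_univ _, rfl⟩)
    have hfabad : f a ∈ bad := Finset.mem_insert_self _ _
    have hUcard : (badᶜ : Finset (Fin ((n-1)*(m-1)+2))).card = (n-3)*(m-1)+1 := by
      rw [Finset.card_compl, hbadcard, Fintype.card_fin]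
      have h2 : (n-1)*(m-1) = (n-3)*(m-1) + 2*(m-1) := by
        have h0 : n - 3 + 2 = n - 1 := by omega
        rw [← h0]
        ring
      omega
    by_cases hclq : ∃ C : Finset (Fin ((n-1)*(m-1)+2)), C ⊆ badᶜ ∧ C.card = m ∧
        (∀ x ∈ C, ∀ y ∈ C, x ≠ y → ¬ R.Adj x y)
    · -- a blue K_m avoiding everything: blue 2K_m
      obtain ⟨C, hCU, hCcard, hCblue⟩ := hclq
      have eC := Finset.equivFinOfCardEq hCcard
      refine Or.inr (build_two_cliques R (fun j => (eC.symm j).1)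
        (fun j => if h : (j : ℕ) < m - 1 then B 0 ⟨j, h⟩ else f a) ?_ ?_ ?_)
      · intro j j' hjj
        have hne : (eC.symm j).1 ≠ (eC.symm j').1 := by
          intro he
          exact hjj (eC.symm.injective (Subtype.ext he))
        exact ⟨hne, hCblue _ (eC.symm j).2 _ (eC.symm j').2 hne⟩
      · intro j j' hjj
        by_cases h1 : (j : ℕ) < m - 1 <;> by_cases h2 : (j' : ℕ) < m - 1
        · rw [dif_pos h1, dif_pos h2]
          have hne : (⟨(j:ℕ), h1⟩ : Fin (m-1)) ≠ ⟨(j':ℕ), h2⟩ := by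
            intro he
            apply hjj
            apply Fin.ext
            simpa [Fin.ext_iff] using he
          constructor
          · intro he
            exact hne (hBinj 0 _ 0 _ he).2
          · exact hBblue 0 _ _ hne
        · rw [dif_pos h1, dif_neg h2]
          exact ⟨fun he => hfaBne _ _ he.symm, fun hr => hfaB 0 _ hr.symm⟩
        · rw [dif_neg h1, dif_pos h2]
          exact ⟨hfaBne _ _, hfaB 0 _⟩
        · exfalso
          have := j.isLt; have := j'.isLt
          exact hjj (Fin.ext (by omega))
      · intro j j'
        have hCmem : (eC.symm j).1 ∈ C := (eC.symm j).2
        have hnotbad : (eC.symm j).1 ∉ bad := Finset.mem_compl.mp (hCU hCmem)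
        by_cases h2 : (j' : ℕ) < m - 1
        · rw [dif_pos h2]
          intro he
          exact hnotbad (he ▸ hBbad 0 _)
        · rw [dif_neg h2]
          intro he
          exact hnotbad (he ▸ hfabad)
    · -- Chvátal: embed T2 into U, then extend by two pendants into B 0 and B 1
      have harith : ((n-2)-1)*(m-1)+1 ≤ (badᶜ : Finset (Fin ((n-1)*(m-1)+2))).card := by
        rw [hUcard]
        have h0 : n - 2 - 1 = n - 3 := by omega
        rw [h0]
      obtain ⟨h, hhinj, hhmem, hhadj⟩ := chvatal_embed R (fun x y => Tstar.Adj x y)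
        (fun x => n * tdepth Tstar hT a x + x.val) V2 (n-2)
        (fun x y hxy => hxy.symm) (fun x => Tstar.loopless.irrefl x) hordinj hpar hV2card
        m badᶜ hclq harith
      have hu1U : h a ∈ badᶜ := hhmem a haV2
      have hu2U : h l' ∈ badᶜ := hhmem l' hl'V2
      by_cases hw1 : ∃ j, R.Adj (h a) (B 0 j)
      · by_cases hw2 : ∃ j, R.Adj (h l') (B 1 j)
        · -- red T**
          obtain ⟨j1, hj1⟩ := hw1
          obtain ⟨j2, hj2⟩ := hw2
          refine Or.inl ⟨fun x => if x = b then B 0 j1 else if x = l then B 1 j2 else h x,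
            ?_, ?_⟩
          · intro x y he
            dsimp only at he
            by_cases hxb : x = b <;> by_cases hyb : y = b
            · rw [hxb, hyb]
            · rw [if_pos hxb, if_neg hyb] at he
              by_cases hyl : y = l
              · rw [if_pos hyl] at he
                exact absurd (hBinj _ _ _ _ he).1 (by simp [Fin.ext_iff])
              · rw [if_neg hyl] at he
                exact absurd (he ▸ (hBbad 0 j1)) (Finset.mem_compl.mp (hhmem y (hmemV2 y hyb hyl)))
            · rw [if_neg hxb, if_pos hyb] at he
              by_cases hxl : x = l
              · rw [if_pos hxl] at he
                exact absurd (hBinj _ _ _ _ he).1 (by simp [Fin.ext_iff])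
              · rw [if_neg hxl] at he
                exact absurd (he.symm ▸ (hBbad 0 j1))
                  (Finset.mem_compl.mp (hhmem x (hmemV2 x hxb hxl)))
            · rw [if_neg hxb, if_neg hyb] at he
              by_cases hxl : x = l <;> by_cases hyl : y = l
              · rw [hxl, hyl]
              · rw [if_pos hxl, if_neg hyl] at he
                exact absurd (he ▸ (hBbad 1 j2))
                  (Finset.mem_compl.mp (hhmem y (hmemV2 y hyb hyl)))
              · rw [if_neg hxl, if_pos hyl] at he
                exact absurd (he.symm ▸ (hBbad 1 j2))
                  (Finset.mem_compl.mp (hhmem x (hmemV2 x hxb hxl)))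
              · rw [if_neg hxl, if_neg hyl] at he
                exact hhinj x (hmemV2 x hxb hxl) y (hmemV2 y hyb hyl) he
          · intro x y hxy
            rw [hadj] at hxy
            dsimp only
            rcases hxy with ⟨h1, hx, hy⟩ | ⟨hx, hy⟩ | ⟨hx, hy⟩
            · rw [if_neg hx, if_neg hy]
              by_cases hxl : x = l <;> by_cases hyl : y = l
              · exfalso; rw [hxl, hyl] at h1; exact Tstar.loopless.irrefl l h1
              · rw [if_pos hxl, if_neg hyl]
                subst hxl
                have : y = l' := hleafT0 y hy h1
                subst this
                exact hj2.symm
              · rw [if_neg hxl, if_pos hyl]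
                subst hyl
                have : x = l' := hleafT0 x hx h1.symm
                subst this
                exact hj2
              · rw [if_neg hxl, if_neg hyl]
                exact hhadj x (hmemV2 x hx hxl) y (hmemV2 y hy hyl) h1
            · have hyb : ¬ (y = b) := fun hc => hab (hy.symm.trans hc)
              have hyl : ¬ (y = l) := fun hc => hla' (hc.symm.trans hy)
              rw [if_pos hx, if_neg hyb, if_neg hyl, hy]
              exact hj1.symm
            · have hxb : ¬ (x = b) := fun hc => hab (hx.symm.trans hc)
              have hxl : ¬ (x = l) := fun hc => hla' (hc.symm.trans hx)
              rw [if_neg hxb, if_neg hxl, if_pos hy, hx]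
              exact hj1
        · -- h l' is blue to all of B 1 : blue 2K_m
          push_neg at hw2
          refine Or.inr (build_two_cliques R
            (fun j => if hj : (j : ℕ) < m - 1 then B 1 ⟨j, hj⟩ else h l')
            (fun j => if hj : (j : ℕ) < m - 1 then B 0 ⟨j, hj⟩ else f a) ?_ ?_ ?_)
          · intro j j' hjj
            by_cases h1 : (j : ℕ) < m - 1 <;> by_cases h2 : (j' : ℕ) < m - 1
            · rw [dif_pos h1, dif_pos h2]
              have hne : (⟨(j:ℕ), h1⟩ : Fin (m-1)) ≠ ⟨(j':ℕ), h2⟩ := by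
                intro he
                exact hjj (Fin.ext (by simpa [Fin.ext_iff] using he))
              exact ⟨fun he => hne (hBinj _ _ _ _ he).2, hBblue 1 _ _ hne⟩
            · rw [dif_pos h1, dif_neg h2]
              refine ⟨fun he => ?_, fun hr => hw2 _ hr.symm⟩
              exact (Finset.mem_compl.mp hu2U) (he ▸ hBbad 1 _)
            · rw [dif_neg h1, dif_pos h2]
              refine ⟨fun he => ?_, fun hr => hw2 _ hr⟩
              exact (Finset.mem_compl.mp hu2U) (he.symm ▸ hBbad 1 _)
            · exfalso
              have := j.isLt; have := j'.isLt
              exact hjj (Fin.ext (by omega))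
          · intro j j' hjj
            by_cases h1 : (j : ℕ) < m - 1 <;> by_cases h2 : (j' : ℕ) < m - 1
            · rw [dif_pos h1, dif_pos h2]
              have hne : (⟨(j:ℕ), h1⟩ : Fin (m-1)) ≠ ⟨(j':ℕ), h2⟩ := by
                intro he
                exact hjj (Fin.ext (by simpa [Fin.ext_iff] using he))
              exact ⟨fun he => hne (hBinj _ _ _ _ he).2, hBblue 0 _ _ hne⟩
            · rw [dif_pos h1, dif_neg h2]
              exact ⟨fun he => hfaBne _ _ he.symm, fun hr => hfaB 0 _ hr.symm⟩
            · rw [dif_neg h1, dif_pos h2]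
              exact ⟨hfaBne _ _, hfaB 0 _⟩
            · exfalso
              have := j.isLt; have := j'.isLt
              exact hjj (Fin.ext (by omega))
          · intro j j'
            by_cases h1 : (j : ℕ) < m - 1 <;> by_cases h2 : (j' : ℕ) < m - 1
            · rw [dif_pos h1, dif_pos h2]
              intro he
              exact absurd (hBinj _ _ _ _ he).1 (by simp [Fin.ext_iff])
            · rw [dif_pos h1, dif_neg h2]
              intro he
              exact hfaBne 1 _ he.symm
            · rw [dif_neg h1, dif_pos h2]
              intro he
              exact (Finset.mem_compl.mp hu2U) (he ▸ hBbad 0 _)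
            · rw [dif_neg h1, dif_neg h2]
              intro he
              exact (Finset.mem_compl.mp hu2U) (he ▸ hfabad)
      · -- h a is blue to all of B 0 : blue 2K_m
        push_neg at hw1
        refine Or.inr (build_two_cliques R
          (fun j => if hj : (j : ℕ) < m - 1 then B 0 ⟨j, hj⟩ else h a)
          (fun j => if hj : (j : ℕ) < m - 1 then B 1 ⟨j, hj⟩ else f a) ?_ ?_ ?_)
        · intro j j' hjj
          by_cases h1 : (j : ℕ) < m - 1 <;> by_cases h2 : (j' : ℕ) < m - 1
          · rw [dif_pos h1, dif_pos h2]
            have hne : (⟨(j:ℕ), h1⟩ : Fin (m-1)) ≠ ⟨(j':ℕ), h2⟩ := by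
              intro he
              exact hjj (Fin.ext (by simpa [Fin.ext_iff] using he))
            exact ⟨fun he => hne (hBinj _ _ _ _ he).2, hBblue 0 _ _ hne⟩
          · rw [dif_pos h1, dif_neg h2]
            refine ⟨fun he => ?_, fun hr => hw1 _ hr.symm⟩
            exact (Finset.mem_compl.mp hu1U) (he ▸ hBbad 0 _)
          · rw [dif_neg h1, dif_pos h2]
            refine ⟨fun he => ?_, fun hr => hw1 _ hr⟩
            exact (Finset.mem_compl.mp hu1U) (he.symm ▸ hBbad 0 _)
          · exfalso
            have := j.isLt; have := j'.isLt
            exact hjj (Fin.ext (by omega))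
        · intro j j' hjj
          by_cases h1 : (j : ℕ) < m - 1 <;> by_cases h2 : (j' : ℕ) < m - 1
          · rw [dif_pos h1, dif_pos h2]
            have hne : (⟨(j:ℕ), h1⟩ : Fin (m-1)) ≠ ⟨(j':ℕ), h2⟩ := by
              intro he
              exact hjj (Fin.ext (by simpa [Fin.ext_iff] using he))
            exact ⟨fun he => hne (hBinj _ _ _ _ he).2, hBblue 1 _ _ hne⟩
          · rw [dif_pos h1, dif_neg h2]
            exact ⟨fun he => hfaBne _ _ he.symm, fun hr => hfaB 1 _ hr.symm⟩
          · rw [dif_neg h1, dif_pos h2]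
            exact ⟨hfaBne _ _, hfaB 1 _⟩
          · exfalso
            have := j.isLt; have := j'.isLt
            exact hjj (Fin.ext (by omega))
        · intro j j'
          by_cases h1 : (j : ℕ) < m - 1 <;> by_cases h2 : (j' : ℕ) < m - 1
          · rw [dif_pos h1, dif_pos h2]
            intro he
            exact absurd (hBinj _ _ _ _ he).1 (by simp [Fin.ext_iff])
          · rw [dif_pos h1, dif_neg h2]
            intro he
            exact hfaBne 0 _ he.symm
          · rw [dif_neg h1, dif_pos h2]
            intro he
            exact (Finset.mem_compl.mp hu1U) (he ▸ hBbad 1 _)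
          · rw [dif_neg h1, dif_neg h2]
            intro he
            exact (Finset.mem_compl.mp hu1U) (he ▸ hfabad)


end StretchAux
end

section
/- For every n, any tree on n vertices can be transformed into any other tree on n vertices by a finite sequence of Stretching and Expanding operations. -/
open SimpleGraph Finset

/-!
Fix a root `u` and, for a subtree `A ∋ u` of `T`, let `withPendants T u A` be `T` on `A` with every
other vertex hung on `u` as a leaf: it is `T` for `A = univ` and the star at `u` for `A = {u}`.
Deleting from `A` a vertex `x` farthest from `u` moves the leaf `x` from its parent `w` to `u`; when
`u` has at most one non-leaf neighbour this is an expansion at `u`. Conversely, putting `x` back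
moves the leaf `x` from `u` to `w`: a stretch if `w` is a leaf, and otherwise an expansion at `w`,
whose other neighbours all lie at maximal depth and so are leaves. Hence every tree reduces to the
star at a suitable vertex, and the star at any vertex grows into every tree.
-/

variable {V : Type*}

section Leaves

variable {G : SimpleGraph V} {a b x y z : V}

lemma IsLeaf.eq_of_adj (hb : IsLeaf G b) (hx : G.Adj b x) (hy : G.Adj b y) : x = y := by
  obtain ⟨w, -, hw⟩ := hb
  rw [hw x hx, hw y hy]

lemma isLeaf_of_adj_iff (h : ∀ y, G.Adj b y ↔ y = a) : IsLeaf G b :=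
  ⟨a, (h a).2 rfl, fun y hy => (h y).1 hy⟩

lemma not_isLeaf_of_adj_of_adj (hy : G.Adj x y) (hz : G.Adj x z) (hyz : y ≠ z) :
    ¬IsLeaf G x :=
  fun hx => hyz (hx.eq_of_adj hy hz)

lemma exists_adj_ne_of_not_isLeaf (hx : ¬IsLeaf G x) (hy : G.Adj x y) :
    ∃ z, G.Adj x z ∧ z ≠ y := by
  by_contra! h
  exact hx ⟨y, hy, h⟩

lemma two_le_ncard_neighborSet [Finite V] (hx : ¬IsLeaf G x) (hy : G.Adj x y) :
    2 ≤ (G.neighborSet x).ncard := by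
  obtain ⟨z, hz, hzy⟩ := exists_adj_ne_of_not_isLeaf hx hy
  exact (Set.one_lt_ncard (Set.toFinite _)).2 ⟨y, hy, z, hz, hzy.symm⟩

lemma ncard_neighborSet_le_card_sub_two [Fintype V] (hb : ¬G.Adj x b) (hbx : b ≠ x) :
    (G.neighborSet x).ncard ≤ Fintype.card V - 2 := by
  have hsub : G.neighborSet x ⊆ ({x, b} : Set V)ᶜ := by
    rintro y hy (rfl | rfl)
    exacts [G.irrefl hy, hb hy]
  calc (G.neighborSet x).ncard ≤ (({x, b} : Set V)ᶜ).ncard := Set.ncard_le_ncard hsub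
    _ = Fintype.card V - 2 := by
      rw [Set.ncard_compl, Set.ncard_pair hbx.symm, Nat.card_eq_fintype_card]

end Leaves

section MoveLeaf

variable {G H : SimpleGraph V} {a b u z₀ : V}

def moveLeaf (G : SimpleGraph V) (b a : V) : SimpleGraph V :=
  fromRel fun x y => (G.Adj x y ∧ x ≠ b ∧ y ≠ b) ∨ (x = b ∧ y = a)

lemma moveLeaf_adj (hab : a ≠ b) {x y : V} : (moveLeaf G b a).Adj x y ↔
    (G.Adj x y ∧ x ≠ b ∧ y ≠ b) ∨ (x = b ∧ y = a) ∨ (x = a ∧ y = b) := by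
  simp only [moveLeaf, fromRel_adj]
  grind [G.adj_symm, G.ne_of_adj]

lemma moveLeaf_eq_of_adj_iff (hG : ∀ y, G.Adj b y ↔ y = a)
    (hGH : ∀ x y, x ≠ b → y ≠ b → (H.Adj x y ↔ G.Adj x y)) : moveLeaf H b a = G := by
  have hab : a ≠ b := fun h => G.irrefl ((hG b).2 h.symm)
  ext x y
  rw [moveLeaf_adj hab]
  by_cases hx : x = b
  · subst hx
    grind
  by_cases hy : y = b
  · subst hy
    grind [G.adj_symm]
  grind

lemma moveLeaf_self (hG : ∀ y, G.Adj b y ↔ y = a) : moveLeaf G b a = G :=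
  moveLeaf_eq_of_adj_iff hG fun _ _ _ _ => Iff.rfl

lemma isStretch_moveLeaf (hab : a ≠ b) (ha : IsLeaf G a) (hb : IsLeaf G b) :
    isStretch G (moveLeaf G b a) :=
  ⟨a, b, hab, ha, hb, fun _ _ => moveLeaf_adj hab⟩

lemma isExpand_moveLeaf [Fintype V] (hz₀ : G.Adj u z₀) (hz₀_leaf : ¬IsLeaf G z₀)
    (hleaves : ∀ z, G.Adj u z → z ≠ z₀ → IsLeaf G z) (hu : ¬IsLeaf G u)
    (hb : IsLeaf G b) (hbu : b ≠ u) (hub : ¬G.Adj u b) :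
    isExpand G (moveLeaf G b u) :=
  ⟨u, b, z₀, hz₀, hz₀_leaf, hleaves, two_le_ncard_neighborSet hu hz₀,
    ncard_neighborSet_le_card_sub_two hub hbu, hb, hbu, hub,
    fun _ _ => moveLeaf_adj hbu.symm⟩

end MoveLeaf

namespace SimpleGraph

variable {T : SimpleGraph V} {u x y w w' : V}

lemma IsTree.dist_add_one_eq_of_adj_of_le (hT : T.IsTree) (h : T.Adj x y)
    (hle : T.dist u y ≤ T.dist u x) : T.dist u y + 1 = T.dist u x := by
  have := hT.dist_eq_dist_add_one_of_adj u h
  omega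

lemma IsTree.exists_adj_dist_add_one_eq (hT : T.IsTree) (hx : x ≠ u) :
    ∃ w, T.Adj x w ∧ T.dist u w + 1 = T.dist u x := by
  obtain ⟨p, hp⟩ := hT.connected.exists_walk_length_eq_dist u x
  have hnil : ¬p.Nil := fun h => hx h.eq.symm
  have hadj := (p.adj_penultimate hnil).symm
  refine ⟨p.penultimate, hadj, hT.dist_add_one_eq_of_adj_of_le hadj ?_⟩
  calc T.dist u p.penultimate ≤ p.dropLast.length := dist_le _
    _ ≤ T.dist u x := by rw [Walk.length_dropLast, hp]; omega

lemma IsTree.eq_of_adj_of_dist_add_one_eq (hT : T.IsTree) (hw : T.Adj x w) (hw' : T.Adj x w')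
    (hd : T.dist u w + 1 = T.dist u x) (hd' : T.dist u w' + 1 = T.dist u x) : w = w' := by
  obtain ⟨p, -, hp⟩ := hT.connected.exists_path_of_dist u w
  obtain ⟨q, -, hq⟩ := hT.connected.exists_path_of_dist u w'
  have hP := (p.concat hw.symm).isPath_of_length_eq_dist (by rw [Walk.length_concat, hp, hd])
  have hQ := (q.concat hw'.symm).isPath_of_length_eq_dist (by rw [Walk.length_concat, hq, hd'])
  simpa using congrArg Walk.penultimate ((hT.existsUnique_path u x).unique hP hQ)

lemma IsTree.dist_eq_add_one_of_adj_of_ne (hT : T.IsTree) (hw : T.Adj x w)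
    (hd : T.dist u w + 1 = T.dist u x) (hy : T.Adj x y) (hyw : y ≠ w) :
    T.dist u y = T.dist u x + 1 := by
  rcases hT.dist_eq_dist_add_one_of_adj u hy with h | h
  · exact absurd (hT.eq_of_adj_of_dist_add_one_eq hy hw h.symm hd) hyw
  · exact h

end SimpleGraph

section Pendants

variable {T : SimpleGraph V} {u v w x y z : V} {A : Finset V}

/-- In a tree, the vertex sets of the subtrees containing `u`. -/
def IsRootedSubtree (T : SimpleGraph V) (u : V) (A : Finset V) : Prop :=
  u ∈ A ∧ ∀ x ∈ A, ∀ y, T.Adj x y → T.dist u y < T.dist u x → y ∈ A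

lemma isRootedSubtree_univ [Fintype V] (T : SimpleGraph V) (u : V) :
    IsRootedSubtree T u univ :=
  ⟨mem_univ u, fun _ _ y _ _ => mem_univ y⟩

lemma IsRootedSubtree.exists_farthest (hT : T.Connected) (hA : IsRootedSubtree T u A)
    (hAu : A ≠ {u}) : ∃ x ∈ A, x ≠ u ∧ ∀ y ∈ A, T.dist u y ≤ T.dist u x := by
  obtain ⟨x, hx, hmax⟩ := A.exists_max_image (T.dist u) ⟨u, hA.1⟩
  refine ⟨x, hx, fun hxu => hAu (eq_singleton_iff_unique_mem.2 ⟨hA.1, fun y hy => ?_⟩), hmax⟩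
  have := hmax y hy
  rw [hxu, dist_self] at this
  exact (hT.dist_eq_zero_iff.1 (by omega)).symm

lemma IsRootedSubtree.exists_mem_dist_eq (hT : T.IsTree) (hA : IsRootedSubtree T u A)
    (hx : x ∈ A) {k : ℕ} (hk : k ≤ T.dist u x) : ∃ y ∈ A, T.dist u y = k := by
  obtain ⟨m, hm⟩ := Nat.exists_eq_add_of_le hk
  induction m generalizing x with
  | zero => exact ⟨x, hx, hm⟩
  | succ m ih =>
    have hxu : x ≠ u := by
      rintro rfl
      simp at hm
    obtain ⟨w, hw, hd⟩ := hT.exists_adj_dist_add_one_eq hxu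
    exact ih (hA.2 x hx w hw (by omega)) (by omega) (by omega)

def withPendants (T : SimpleGraph V) (u : V) (A : Finset V) : SimpleGraph V :=
  fromRel fun x y => (T.Adj x y ∧ x ∈ A ∧ y ∈ A) ∨ (x ∉ A ∧ y = u)

lemma withPendants_univ [Fintype V] (T : SimpleGraph V) (u : V) : withPendants T u univ = T := by
  ext x y
  simp only [withPendants, fromRel_adj, mem_univ, and_true, not_true_eq_false, false_and,
    or_false]
  exact ⟨fun h => h.2.elim id .symm, fun h => ⟨h.ne, Or.inl h⟩⟩

lemma withPendants_singleton (T : SimpleGraph V) (u : V) :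
    withPendants T u {u} = starGraph u := by
  ext x y
  simp only [withPendants, fromRel_adj, starGraph_adj, mem_singleton]
  grind

lemma withPendants_adj_of_notMem (hu : u ∈ A) (hz : z ∉ A) :
    (withPendants T u A).Adj z y ↔ y = u := by
  simp only [withPendants, fromRel_adj]
  grind

lemma withPendants_adj_of_mem (hz : z ∈ A) (hzu : z ≠ u) :
    (withPendants T u A).Adj z y ↔ T.Adj z y ∧ y ∈ A := by
  simp only [withPendants, fromRel_adj]
  grind [T.adj_symm, T.ne_of_adj]

lemma withPendants_adj_of_adj (hu : u ∈ A) (h : T.Adj u y) : (withPendants T u A).Adj u y := by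
  simp only [withPendants, fromRel_adj]
  grind [T.ne_of_adj]

lemma withPendants_adj_iff_of_farthest (hT : T.IsTree) (hz : z ∈ A) (hzu : z ≠ u)
    (hmax : ∀ y ∈ A, T.dist u y ≤ T.dist u z) (hw : T.Adj z w)
    (hd : T.dist u w + 1 = T.dist u z) (hwA : w ∈ A) :
    (withPendants T u A).Adj z y ↔ y = w := by
  rw [withPendants_adj_of_mem hz hzu]
  refine ⟨fun ⟨hy, hyA⟩ => ?_, by rintro rfl; exact ⟨hw, hwA⟩⟩
  exact hT.eq_of_adj_of_dist_add_one_eq hy hw (hT.dist_add_one_eq_of_adj_of_le hy (hmax y hyA)) hd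

lemma IsRootedSubtree.not_isLeaf_withPendants (hT : T.IsTree) (hA : IsRootedSubtree T u A)
    (hv : v ∈ A) (hw : w ∈ A) (hvw : T.Adj v w) (hd : T.dist u v + 1 = T.dist u w)
    (hx : x ∉ A) : ¬IsLeaf (withPendants T u A) v := by
  by_cases hvu : v = u
  · subst hvu
    exact not_isLeaf_of_adj_of_adj (withPendants_adj_of_adj hA.1 hvw)
      ((withPendants_adj_of_notMem hA.1 hx).2 rfl).symm (by rintro rfl; exact hx hw)
  obtain ⟨v', hv', hd'⟩ := hT.exists_adj_dist_add_one_eq hvu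
  exact not_isLeaf_of_adj_of_adj ((withPendants_adj_of_mem hv hvu).2 ⟨hvw, hw⟩)
    ((withPendants_adj_of_mem hv hvu).2 ⟨hv', hA.2 v hv v' hv' (by omega)⟩)
    (by rintro rfl; omega)

variable [DecidableEq V]

lemma IsRootedSubtree.erase (hA : IsRootedSubtree T u A) (hxu : x ≠ u)
    (hmax : ∀ y ∈ A, T.dist u y ≤ T.dist u x) : IsRootedSubtree T u (A.erase x) := by
  refine ⟨mem_erase.2 ⟨hxu.symm, hA.1⟩, fun z hz y hzy hlt =>
    mem_erase.2 ⟨?_, hA.2 z (mem_of_mem_erase hz) y hzy hlt⟩⟩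
  rintro rfl
  have := hmax z (mem_of_mem_erase hz)
  omega

lemma withPendants_erase_adj (hy : y ≠ x) (hz : z ≠ x) :
    (withPendants T u (A.erase x)).Adj y z ↔ (withPendants T u A).Adj y z := by
  simp only [withPendants, fromRel_adj, mem_erase]
  grind

lemma moveLeaf_withPendants (hu : u ∈ A) (hxu : x ≠ u) :
    moveLeaf (withPendants T u A) x u = withPendants T u (A.erase x) :=
  moveLeaf_eq_of_adj_iff (fun _ => withPendants_adj_of_notMem (mem_erase.2 ⟨hxu.symm, hu⟩)
    (notMem_erase x A)) fun _ _ hy hz => (withPendants_erase_adj hy hz).symm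

lemma moveLeaf_withPendants_erase (hT : T.IsTree) (hA : IsRootedSubtree T u A) (hx : x ∈ A)
    (hxu : x ≠ u) (hmax : ∀ y ∈ A, T.dist u y ≤ T.dist u x) (hw : T.Adj x w)
    (hd : T.dist u w + 1 = T.dist u x) :
    moveLeaf (withPendants T u (A.erase x)) x w = withPendants T u A :=
  moveLeaf_eq_of_adj_iff
    (fun _ => withPendants_adj_iff_of_farthest hT hx hxu hmax hw hd (hA.2 x hx w hw (by omega)))
    fun _ _ hy hz => withPendants_erase_adj hy hz

lemma withPendants_erase_of_adj (hT : T.IsTree) (hA : IsRootedSubtree T u A) (hx : x ∈ A)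
    (hxu : x ≠ u) (hmax : ∀ y ∈ A, T.dist u y ≤ T.dist u x) (hux : T.Adj x u) :
    withPendants T u (A.erase x) = withPendants T u A := by
  have hd : T.dist u u + 1 = T.dist u x := by
    rw [dist_self, zero_add, dist_eq_one_iff_adj.2 hux.symm]
  rw [← moveLeaf_withPendants_erase hT hA hx hxu hmax hux hd, moveLeaf_self]
  exact fun _ => withPendants_adj_of_notMem (hA.erase hxu hmax).1 (notMem_erase x A)

end Pendants

section Moves

variable {T : SimpleGraph V} {u w x z z₀ : V} {A : Finset V}

def IsTreeMove [Fintype V] (T T' : SimpleGraph V) : Prop := isStretch T T' ∨ isExpand T T'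

/-- For a tree, the first clause says that `u` is a leaf only if `T` is a single edge. -/
def IsExpansionCenter (T : SimpleGraph V) (u : V) : Prop :=
  (IsLeaf T u → ∀ v, IsLeaf T v) ∧ {z | T.Adj u z ∧ ¬IsLeaf T z}.Subsingleton

lemma exists_isExpansionCenter [Finite V] (hT : T.IsTree) : ∃ u, IsExpansionCenter T u := by
  obtain ⟨r⟩ := hT.connected.nonempty
  by_cases h : ∀ v, IsLeaf T v
  · exact ⟨r, fun _ => h, fun z hz => (hz.2 (h z)).elim⟩
  push Not at h
  obtain ⟨u, hu, hmax⟩ := Set.exists_max_image {v | ¬IsLeaf T v} (T.dist r) (Set.toFinite _) h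
  have hcloser : ∀ z, T.Adj u z → ¬IsLeaf T z → T.dist r z + 1 = T.dist r u :=
    fun z hz hz_leaf => hT.dist_add_one_eq_of_adj_of_le hz (hmax z hz_leaf)
  refine ⟨u, fun h => absurd h hu, ?_⟩
  rintro z ⟨hz, hz_leaf⟩ z' ⟨hz', hz'_leaf⟩
  exact hT.eq_of_adj_of_dist_add_one_eq hz hz' (hcloser z hz hz_leaf) (hcloser z' hz' hz'_leaf)

lemma IsExpansionCenter.isLeaf_withPendants (hu : IsExpansionCenter T u) (huA : u ∈ A)
    (hz₀ : T.Adj u z₀) (hz₀_leaf : ¬IsLeaf T z₀) (huz : (withPendants T u A).Adj u z)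
    (hzz₀ : z ≠ z₀) : IsLeaf (withPendants T u A) z := by
  by_cases hzA : z ∈ A
  · have hzu : z ≠ u := huz.ne'
    have hzu' : T.Adj z u := ((withPendants_adj_of_mem hzA hzu).1 huz.symm).1
    have hz_leaf : IsLeaf T z := by
      by_contra h
      exact hzz₀ (hu.2 ⟨hzu'.symm, h⟩ ⟨hz₀, hz₀_leaf⟩)
    refine isLeaf_of_adj_iff (a := u) fun y => ?_
    rw [withPendants_adj_of_mem hzA hzu]
    exact ⟨fun h => hz_leaf.eq_of_adj h.1 hzu', by rintro rfl; exact ⟨hzu', huA⟩⟩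
  · exact isLeaf_of_adj_iff fun _ => withPendants_adj_of_notMem huA hzA

variable [Fintype V] [DecidableEq V]

lemma isExpand_withPendants_erase (hT : T.IsTree) (hu : IsExpansionCenter T u)
    (hA : IsRootedSubtree T u A) (hx : x ∈ A) (hxu : x ≠ u)
    (hmax : ∀ y ∈ A, T.dist u y ≤ T.dist u x) (hw : T.Adj x w)
    (hd : T.dist u w + 1 = T.dist u x) (hwu : w ≠ u) :
    isExpand (withPendants T u A) (withPendants T u (A.erase x)) := by
  set G := withPendants T u A
  have hxG : ∀ y, G.Adj x y ↔ y = w := fun _ =>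
    withPendants_adj_iff_of_farthest hT hx hxu hmax hw hd (hA.2 x hx w hw (by omega))
  have h2 : 2 ≤ T.dist u x := by
    have := hT.connected.pos_dist_of_ne hwu.symm
    omega
  -- `u`, `z₀`, `z₁` are the first three vertices of the path from `u` to `x`.
  obtain ⟨z₁, hz₁A, hz₁⟩ := hA.exists_mem_dist_eq hT hx h2
  have hz₁u : z₁ ≠ u := by
    rintro rfl
    simp at hz₁
  obtain ⟨z₀, hz₁z₀, hz₀⟩ := hT.exists_adj_dist_add_one_eq hz₁u
  have huz₀ : T.Adj u z₀ := dist_eq_one_iff_adj.1 (by omega)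
  have hz₀A : z₀ ∈ A := hA.2 z₁ hz₁A z₀ hz₁z₀ (by omega)
  have hz₀_leaf : ¬IsLeaf T z₀ := not_isLeaf_of_adj_of_adj huz₀.symm hz₁z₀.symm hz₁u.symm
  obtain ⟨c, huc, hcz₀⟩ :=
    exists_adj_ne_of_not_isLeaf (fun h => hz₀_leaf (hu.1 h z₀)) huz₀
  rw [← moveLeaf_withPendants hA.1 hxu]
  refine isExpand_moveLeaf (withPendants_adj_of_adj hA.1 huz₀) ?_
    (fun z huz hzz₀ => hu.isLeaf_withPendants hA.1 huz₀ hz₀_leaf huz hzz₀)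
    (not_isLeaf_of_adj_of_adj (withPendants_adj_of_adj hA.1 huz₀)
      (withPendants_adj_of_adj hA.1 huc) hcz₀.symm)
    (isLeaf_of_adj_iff hxG) hxu fun h => hwu ((hxG u).1 h.symm).symm
  exact not_isLeaf_of_adj_of_adj ((withPendants_adj_of_mem hz₀A huz₀.ne').2 ⟨huz₀.symm, hA.1⟩)
    ((withPendants_adj_of_mem hz₀A huz₀.ne').2 ⟨hz₁z₀.symm, hz₁A⟩) hz₁u.symm

lemma isTreeMove_erase_withPendants (hT : T.IsTree) (hA : IsRootedSubtree T u A) (hx : x ∈ A)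
    (hxu : x ≠ u) (hmax : ∀ y ∈ A, T.dist u y ≤ T.dist u x) (hw : T.Adj x w)
    (hd : T.dist u w + 1 = T.dist u x) (hwu : w ≠ u) :
    IsTreeMove (withPendants T u (A.erase x)) (withPendants T u A) := by
  set G := withPendants T u (A.erase x)
  have hB := hA.erase hxu hmax
  have hxG : ∀ y, G.Adj x y ↔ y = u := fun _ => withPendants_adj_of_notMem hB.1 (notMem_erase x A)
  have hwx : w ≠ x := hw.ne'
  rw [← moveLeaf_withPendants_erase hT hA hx hxu hmax hw hd]
  by_cases hw_leaf : IsLeaf G w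
  · exact Or.inl (isStretch_moveLeaf hwx hw_leaf (isLeaf_of_adj_iff hxG))
  have hwB : w ∈ A.erase x := mem_erase.2 ⟨hwx, hA.2 x hx w hw (by omega)⟩
  obtain ⟨v, hwv, hdv⟩ := hT.exists_adj_dist_add_one_eq hwu
  have hvB : v ∈ A.erase x := hB.2 w hwB v hwv (by omega)
  refine Or.inr (isExpand_moveLeaf ((withPendants_adj_of_mem hwB hwu).2 ⟨hwv, hvB⟩)
    (hB.not_isLeaf_withPendants hT hvB hwB hwv.symm hdv (notMem_erase x A)) ?_ hw_leaf
    (isLeaf_of_adj_iff hxG) hwx.symm fun h => hwu ((hxG w).1 h.symm))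
  intro z hwz hzv
  obtain ⟨hwz, hzB⟩ := (withPendants_adj_of_mem hwB hwu).1 hwz
  have hdz := hT.dist_eq_add_one_of_adj_of_ne hwv hdv hwz hzv
  have hzu : z ≠ u := by
    rintro rfl
    simp at hdz
  refine isLeaf_of_adj_iff fun _ =>
    withPendants_adj_iff_of_farthest hT hzB hzu (fun y hy => ?_) hwz.symm (by omega) hwB
  have := hmax y (mem_of_mem_erase hy)
  omega

lemma reflTransGen_withPendants_starGraph (hT : T.IsTree) (hu : IsExpansionCenter T u)
    (hA : IsRootedSubtree T u A) :
    Relation.ReflTransGen IsTreeMove (withPendants T u A) (starGraph u) := by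
  induction A using Finset.strongInduction with
  | H A ih =>
    by_cases hAu : A = {u}
    · rw [hAu, withPendants_singleton]
    obtain ⟨x, hx, hxu, hmax⟩ := hA.exists_farthest hT.connected hAu
    obtain ⟨w, hw, hd⟩ := hT.exists_adj_dist_add_one_eq hxu
    have ih' := ih _ (erase_ssubset hx) (hA.erase hxu hmax)
    obtain rfl | hwu := eq_or_ne w u
    · rwa [withPendants_erase_of_adj hT hA hx hxu hmax hw] at ih'
    · exact .head (Or.inr (isExpand_withPendants_erase hT hu hA hx hxu hmax hw hd hwu)) ih'

lemma reflTransGen_starGraph_withPendants (hT : T.IsTree) (hA : IsRootedSubtree T u A) :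
    Relation.ReflTransGen IsTreeMove (starGraph u) (withPendants T u A) := by
  induction A using Finset.strongInduction with
  | H A ih =>
    by_cases hAu : A = {u}
    · rw [hAu, withPendants_singleton]
    obtain ⟨x, hx, hxu, hmax⟩ := hA.exists_farthest hT.connected hAu
    obtain ⟨w, hw, hd⟩ := hT.exists_adj_dist_add_one_eq hxu
    have ih' := ih _ (erase_ssubset hx) (hA.erase hxu hmax)
    obtain rfl | hwu := eq_or_ne w u
    · rwa [withPendants_erase_of_adj hT hA hx hxu hmax hw] at ih'
    · exact .tail ih' (isTreeMove_erase_withPendants hT hA hx hxu hmax hw hd hwu)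

end Moves

/-- Any tree on `n` vertices can be obtained (up to isomorphism) from any other tree
on `n` vertices by a finite sequence of Stretching and Expanding operations. -/
theorem stmt_7 (n : ℕ) (T T' : SimpleGraph (Fin n)) (hT : T.IsTree) (hT' : T'.IsTree) :
    ∃ T'' : SimpleGraph (Fin n),
      Relation.ReflTransGen (fun A B => isStretch A B ∨ isExpand A B) T T'' ∧
      Nonempty (T'' ≃g T') := by
  obtain ⟨u, hu⟩ := exists_isExpansionCenter hT
  have h₁ := reflTransGen_withPendants_starGraph hT hu (isRootedSubtree_univ T u)
  have h₂ := reflTransGen_starGraph_withPendants hT' (isRootedSubtree_univ T' u)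
  rw [withPendants_univ] at h₁ h₂
  exact ⟨T', h₁.trans h₂, ⟨Iso.refl⟩⟩
end

section
/- If a property P of trees holds for some tree T on n vertices, and P is preserved by both the Stretching and Expanding operations, then P holds for every tree on n vertices. -/
open SimpleGraph Finset

/-!
Call `f 0, …, f m` a pendant path of a tree if `f 0` is a leaf and `f 1, …, f (m - 1)` have degree
two; a tree on `n` vertices with a pendant path of length `n - 1` is a path. Given a pendant path
of length `m < n - 1` starting at `r`, a vertex `x` farthest from `r` is a leaf off the path, and
moving `x` to hang at `r` yields a tree with a pendant path of length `m + 1`. That move is a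
Stretching, and it is undone by a Stretching or an Expanding at the neighbour of `x`. So `P` climbs
from `T0` to a path, passes to every path by isomorphism, and descends from a path to every tree.
-/

namespace SimpleGraph

variable {V : Type*}

lemma isLeaf_iff_exists_neighborSet_eq {G : SimpleGraph V} {a : V} :
    IsLeaf G a ↔ ∃ w, G.neighborSet a = {w} := by
  simp only [IsLeaf, Set.eq_singleton_iff_unique_mem, mem_neighborSet, ExistsUnique]

lemma not_isLeaf_of_adj_of_adj {G : SimpleGraph V} {a v w : V} (hv : G.Adj a v) (hw : G.Adj a w)
    (hvw : v ≠ w) : ¬ IsLeaf G a :=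
  fun ⟨_, _, huniq⟩ => hvw ((huniq v hv).trans (huniq w hw).symm)

lemma ncard_neighborSet_le_card_sub_two [Fintype V] {G : SimpleGraph V} {v x : V} (hvx : v ≠ x)
    (h : ¬ G.Adj v x) : (G.neighborSet v).ncard ≤ Fintype.card V - 2 := by
  have hsub : G.neighborSet v ⊆ {v, x}ᶜ := by
    rintro y hy (rfl | rfl)
    exacts [G.loopless.irrefl _ hy, h hy]
  calc _ ≤ ({v, x}ᶜ : Set V).ncard := Set.ncard_le_ncard hsub
    _ = Fintype.card V - 2 := by rw [Set.ncard_compl, Set.ncard_pair hvx, Nat.card_eq_fintype_card]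

def moveLeaf (T : SimpleGraph V) (a b : V) : SimpleGraph V :=
  T.deleteIncidenceSet b ⊔ edge a b

section MoveLeaf

variable {T : SimpleGraph V} {a b c v : V}

lemma moveLeaf_adj (hab : a ≠ b) {x y : V} :
    (T.moveLeaf a b).Adj x y ↔
      (T.Adj x y ∧ x ≠ b ∧ y ≠ b) ∨ (x = b ∧ y = a) ∨ (x = a ∧ y = b) := by
  simp only [moveLeaf, sup_adj, deleteIncidenceSet_adj, edge_adj]
  constructor
  · rintro (h | ⟨h | h, -⟩) <;> tauto
  · rintro (h | ⟨rfl, rfl⟩ | ⟨rfl, rfl⟩)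
    · exact Or.inl h
    · exact Or.inr ⟨Or.inr ⟨rfl, rfl⟩, hab.symm⟩
    · exact Or.inr ⟨Or.inl ⟨rfl, rfl⟩, hab⟩

lemma moveLeaf_adj_of_ne {x y : V} (h : T.Adj x y) (hx : x ≠ b) (hy : y ≠ b) :
    (T.moveLeaf a b).Adj x y :=
  Or.inl (deleteIncidenceSet_adj.2 ⟨h, hx, hy⟩)

lemma neighborSet_moveLeaf_right (hab : a ≠ b) : (T.moveLeaf a b).neighborSet b = {a} := by
  ext y
  simp only [mem_neighborSet, moveLeaf_adj hab, Set.mem_singleton_iff]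
  grind

lemma neighborSet_moveLeaf_left (hab : a ≠ b) :
    (T.moveLeaf a b).neighborSet a = insert b (T.neighborSet a) := by
  ext y
  simp only [mem_neighborSet, Set.mem_insert_iff, moveLeaf_adj hab]
  by_cases hy : y = b <;> simp [hy, hab]

lemma neighborSet_moveLeaf_of_ne (hva : v ≠ a) (hvb : v ≠ b) :
    (T.moveLeaf a b).neighborSet v = T.neighborSet v \ {b} := by
  ext y
  simp [moveLeaf, deleteIncidenceSet_adj, edge_adj, hva, hvb]

lemma isLeaf_moveLeaf_of_ne (hv : T.neighborSet v = {c}) (hva : v ≠ a) (hvb : v ≠ b)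
    (hcb : c ≠ b) : IsLeaf (T.moveLeaf a b) v := by
  refine isLeaf_iff_exists_neighborSet_eq.2 ⟨c, ?_⟩
  rw [neighborSet_moveLeaf_of_ne hva hvb, hv, Set.sdiff_singleton_eq_self (s := {c}) hcb.symm]

lemma moveLeaf_moveLeaf : (T.moveLeaf a b).moveLeaf c b = T.moveLeaf c b := by
  ext x y
  simp only [moveLeaf, sup_adj, deleteIncidenceSet_adj, edge_adj]
  tauto

lemma moveLeaf_eq_self (hb : T.neighborSet b = {a}) : T.moveLeaf a b = T := by
  ext x y
  have hb' : ∀ w, T.Adj b w ↔ w = a := fun w => by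
    rw [← mem_neighborSet, hb, Set.mem_singleton_iff]
  simp only [moveLeaf, sup_adj, deleteIncidenceSet_adj, edge_adj]
  constructor
  · rintro (⟨h, -⟩ | ⟨⟨rfl, rfl⟩ | ⟨rfl, rfl⟩, -⟩)
    · exact h
    · exact ((hb' x).2 rfl).symm
    · exact (hb' y).2 rfl
  · intro h
    by_cases hx : x = b
    · subst hx
      exact Or.inr ⟨Or.inr ⟨rfl, (hb' y).1 h⟩, h.ne⟩
    by_cases hy : y = b
    · subst hy
      exact Or.inr ⟨Or.inl ⟨(hb' x).1 h.symm, rfl⟩, h.ne⟩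
    exact Or.inl ⟨h, hx, hy⟩

lemma isStretch_moveLeaf (hab : a ≠ b) (ha : IsLeaf T a) (hb : IsLeaf T b) :
    isStretch T (T.moveLeaf a b) :=
  ⟨a, b, hab, ha, hb, fun _ _ => moveLeaf_adj hab⟩

lemma isExpand_moveLeaf [Fintype V] {z₀ z₁ : V} (hz₀ : T.Adj a z₀) (hz₀leaf : ¬ IsLeaf T z₀)
    (hleaves : ∀ z, T.Adj a z → z ≠ z₀ → IsLeaf T z) (hz₁ : T.Adj a z₁) (hz₁z₀ : z₁ ≠ z₀)
    (hb : IsLeaf T b) (hba : b ≠ a) (hab : ¬ T.Adj a b) : isExpand T (T.moveLeaf a b) :=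
  ⟨a, b, z₀, hz₀, hz₀leaf, hleaves, (Set.one_lt_ncard).2 ⟨z₀, hz₀, z₁, hz₁, hz₁z₀.symm⟩,
    ncard_neighborSet_le_card_sub_two hba.symm hab, hb, hba, hab,
    fun _ _ => moveLeaf_adj hba.symm⟩

lemma not_reachable_deleteIncidenceSet (hab : a ≠ b) :
    ¬ (T.deleteIncidenceSet b).Reachable a b := by
  rintro ⟨p⟩
  have hnil : ¬ p.reverse.Nil := Walk.not_nil_of_ne hab.symm
  simpa [deleteIncidenceSet_adj] using p.reverse.adj_snd hnil

lemma IsTree.moveLeaf (ht : T.IsTree) (hb : IsLeaf T b) (hab : a ≠ b) :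
    (T.moveLeaf a b).IsTree := by
  refine ⟨?_, (ht.isAcyclic.anti (T.deleteIncidenceSet_le b)).sup_edge_of_not_reachable
    (not_reachable_deleteIncidenceSet hab)⟩
  obtain ⟨c, -, hc⟩ := id hb
  have : Fintype (T.neighborSet b) := ((Set.finite_singleton c).subset hc).fintype
  have hind := ht.connected.induce_compl_singleton_of_degree_eq_one
    (degree_eq_one_iff_existsUnique_adj.2 hb)
  let φ : T.induce {b}ᶜ →g T.moveLeaf a b := ⟨Subtype.val, fun {x y} h => moveLeaf_adj_of_ne h x.2 y.2⟩
  refine connected_iff_exists_forall_reachable _ |>.2 ⟨a, fun w => ?_⟩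
  by_cases hw : w = b
  · subst hw
    exact Adj.reachable ((moveLeaf_adj hab).2 (Or.inr (Or.inr ⟨rfl, rfl⟩)))
  · exact (hind ⟨a, hab⟩ ⟨w, hw⟩).map φ

end MoveLeaf

section Distance

variable {T : SimpleGraph V} {r v w x : V}

lemma Connected.eq_univ_of_forall_neighborSet_subset (hT : T.Connected) {S : Set V} (hv : v ∈ S)
    (hS : ∀ x ∈ S, T.neighborSet x ⊆ S) : S = Set.univ := by
  refine Set.eq_univ_of_forall fun w => ?_
  obtain ⟨p⟩ := hT v w
  induction p with
  | nil => exact hv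
  | cons h _ ih => exact ih (hS _ hv h)

lemma Connected.exists_adj_dist_add_one_eq (hT : T.Connected) (hv : v ≠ r) :
    ∃ w, T.Adj w v ∧ T.dist r w + 1 = T.dist r v := by
  obtain ⟨p, -, hp⟩ := hT.exists_path_of_dist v r
  cases p with
  | nil => exact absurd rfl hv
  | @cons _ w _ h q =>
    have hq : T.dist r w ≤ q.length := dist_comm (u := r) ▸ dist_le q
    have htri : T.dist r v ≤ T.dist r w + T.dist w v := hT.dist_triangle
    rw [(dist_eq_one_iff_adj).2 h.symm] at htri
    rw [Walk.length_cons, dist_comm] at hp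
    exact ⟨w, h.symm, by omega⟩

lemma IsTree.eq_of_adj_of_dist_add_one_eq_s8 (ht : T.IsTree) {w₁ w₂ : V} (h₁ : T.Adj w₁ v)
    (h₂ : T.Adj w₂ v) (hd₁ : T.dist r w₁ + 1 = T.dist r v) (hd₂ : T.dist r w₂ + 1 = T.dist r v) :
    w₁ = w₂ := by
  obtain ⟨p₁, -, hp₁⟩ := ht.connected.exists_path_of_dist r w₁
  obtain ⟨p₂, -, hp₂⟩ := ht.connected.exists_path_of_dist r w₂
  have hpath₁ := (p₁.concat h₁).isPath_of_length_eq_dist (by rw [Walk.length_concat, hp₁, hd₁])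
  have hpath₂ := (p₂.concat h₂).isPath_of_length_eq_dist (by rw [Walk.length_concat, hp₂, hd₂])
  exact (Walk.concat_inj ((ht.existsUnique_path r v).unique hpath₁ hpath₂)).1

lemma IsTree.dist_eq_add_one_of_adj_of_ne_s8 (ht : T.IsTree) (hw : T.Adj w v)
    (hwd : T.dist r w + 1 = T.dist r v) (hx : T.Adj v x) (hxw : x ≠ w) :
    T.dist r x = T.dist r v + 1 :=
  (ht.dist_eq_dist_add_one_of_adj r hx).resolve_left fun h =>
    hxw (ht.eq_of_adj_of_dist_add_one_eq_s8 hx.symm hw h.symm hwd)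

lemma IsTree.neighborSet_eq_of_forall_dist_le (ht : T.IsTree) (hmax : ∀ v, T.dist r v ≤ T.dist r x)
    (hw : T.Adj w x) (hwd : T.dist r w + 1 = T.dist r x) : T.neighborSet x = {w} := by
  ext z
  refine ⟨fun hz => by_contra fun hzw => ?_, fun hz => hz ▸ hw.symm⟩
  have := ht.dist_eq_add_one_of_adj_of_ne_s8 hw hwd hz hzw
  have := hmax z
  omega

end Distance

structure IsPendantPath (T : SimpleGraph V) (f : ℕ → V) (m : ℕ) : Prop where
  injOn : Set.InjOn f (Set.Iic m)
  neighborSet_zero : 0 < m → T.neighborSet (f 0) = {f 1}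
  neighborSet_succ : ∀ i, i + 1 < m → T.neighborSet (f (i + 1)) = {f i, f (i + 2)}

namespace IsPendantPath

variable {T : SimpleGraph V} {f : ℕ → V} {m : ℕ} {x u : V}

lemma eq_iff (hf : IsPendantPath T f m) {i j : ℕ} (hi : i ≤ m) (hj : j ≤ m) :
    f i = f j ↔ i = j :=
  ⟨fun h => hf.injOn hi hj h, congrArg f⟩

lemma adj (hf : IsPendantPath T f m) {i : ℕ} (hi : i < m) : T.Adj (f i) (f (i + 1)) := by
  rw [← mem_neighborSet]
  rcases i with _ | i
  · simp [hf.neighborSet_zero hi]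
  · simp [hf.neighborSet_succ i hi]

lemma adj_iff_of_lt (hf : IsPendantPath T f m) {i j : ℕ} (hij : i < j) (hj : j ≤ m) :
    T.Adj (f i) (f j) ↔ j = i + 1 := by
  refine ⟨fun h => ?_, fun h => h ▸ hf.adj (by omega)⟩
  rw [← mem_neighborSet] at h
  rcases i with _ | i
  · rwa [hf.neighborSet_zero (by omega), Set.mem_singleton_iff, hf.eq_iff hj (by omega)] at h
  · rw [hf.neighborSet_succ i (by omega), Set.mem_insert_iff, Set.mem_singleton_iff,
      hf.eq_iff hj (by omega), hf.eq_iff hj (by omega)] at h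
    omega

lemma neighborSet_subset (hf : IsPendantPath T f m) {i : ℕ} (hi : i < m) :
    T.neighborSet (f i) ⊆ f '' Set.Iic m := by
  rcases i with _ | i
  · rw [hf.neighborSet_zero hi, Set.singleton_subset_iff]
    exact Set.mem_image_of_mem f (Set.mem_Iic.2 hi)
  · rw [hf.neighborSet_succ i hi, Set.insert_subset_iff, Set.singleton_subset_iff]
    exact ⟨Set.mem_image_of_mem f (Set.mem_Iic.2 (by omega)),
      Set.mem_image_of_mem f (Set.mem_Iic.2 hi)⟩

lemma card_le [Fintype V] (hT : T.Connected) (hf : IsPendantPath T f m)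
    (hlast : T.neighborSet (f m) ⊆ f '' Set.Iic m) : Fintype.card V ≤ m + 1 := by
  have huniv : f '' Set.Iic m = Set.univ := by
    refine hT.eq_univ_of_forall_neighborSet_subset (Set.mem_image_of_mem f (Set.mem_Iic.2 le_rfl))
      ?_
    rintro _ ⟨i, hi, rfl⟩
    rcases (Set.mem_Iic.1 hi).lt_or_eq with hi | rfl
    exacts [hf.neighborSet_subset hi, hlast]
  calc Fintype.card V = (Set.univ : Set V).ncard := by simp
    _ ≤ (Set.Iic m).ncard := huniv ▸ Set.ncard_image_le (Set.finite_Iic m)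
    _ = m + 1 := by simp

lemma nonempty_iso_pathGraph [Fintype V] (hf : IsPendantPath T f (Fintype.card V - 1)) :
    Nonempty (pathGraph (Fintype.card V) ≃g T) := by
  let e : Fin (Fintype.card V) → V := fun k => f k
  have he : e.Bijective := (Fintype.bijective_iff_injective_and_card e).2
    ⟨fun k l h => Fin.ext (hf.injOn (Set.mem_Iic.2 (by omega)) (Set.mem_Iic.2 (by omega)) h),
      Fintype.card_fin _⟩
  refine ⟨⟨Equiv.ofBijective e he, fun {k l} => ?_⟩⟩
  simp only [Equiv.ofBijective_apply, pathGraph_adj, e]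
  rcases lt_trichotomy k l with hkl | rfl | hkl
  · rw [hf.adj_iff_of_lt hkl (by omega)]
    omega
  · simp
  · rw [adj_comm, hf.adj_iff_of_lt hkl (by omega)]
    omega

lemma ne_of_isLeaf [Fintype V] (hT : T.Connected) (hf : IsPendantPath T f m)
    (hmV : m + 1 < Fintype.card V) (hx : T.neighborSet x = {u}) (hx₀ : f 0 ≠ x) :
    ∀ i ≤ m, f i ≠ x := by
  rintro (_ | i) hi rfl
  · exact hx₀ rfl
  rcases hi.lt_or_eq with hi | rfl
  · have h := hf.neighborSet_succ i hi
    rw [hx, eq_comm, Set.eq_singleton_iff_unique_mem] at h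
    have := (hf.eq_iff (by omega) (by omega)).1
      ((h.2 _ (Set.mem_insert _ _)).trans (h.2 _ (Set.mem_insert_of_mem _ rfl)).symm)
    omega
  · have hu : f i ∈ T.neighborSet (f (i + 1)) := (hf.adj (Nat.lt_succ_self i)).symm
    rw [hx, Set.mem_singleton_iff] at hu
    have hlast : T.neighborSet (f (i + 1)) ⊆ f '' Set.Iic (i + 1) := by
      rw [hx, ← hu, Set.singleton_subset_iff]
      exact Set.mem_image_of_mem f (Set.mem_Iic.2 (by omega))
    have := hf.card_le hT hlast
    omega

lemma moveLeaf (hf : IsPendantPath T f m) (hm : 0 < m) (hx : ∀ i ≤ m, f i ≠ x) :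
    IsPendantPath (T.moveLeaf (f 0) x) (fun | 0 => x | i + 1 => f i) (m + 1) := by
  have hx₀ : f 0 ≠ x := hx 0 (Nat.zero_le m)
  refine ⟨?_, fun _ => neighborSet_moveLeaf_right hx₀, ?_⟩
  · rintro (_ | i) hi (_ | j) hj h
    · rfl
    · exact absurd h.symm (hx j (by simpa using hj))
    · exact absurd h (hx i (by simpa using hi))
    · simp only [Set.mem_Iic, add_le_add_iff_right] at hi hj
      exact congrArg (· + 1) (hf.injOn hi hj h)
  · rintro (_ | i) hi
    · change _ = {x, f 1}
      rw [neighborSet_moveLeaf_left hx₀, hf.neighborSet_zero hm]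
    · change _ = {f i, f (i + 2)}
      have hi₀ : f (i + 1) ≠ f 0 := by rw [Ne, hf.eq_iff (by omega) (by omega)]; omega
      rw [neighborSet_moveLeaf_of_ne hi₀ (hx _ (by omega)), hf.neighborSet_succ i (by omega),
        Set.sdiff_singleton_eq_self]
      rintro (h | h)
      exacts [hx i (by omega) h.symm, hx (i + 2) (by omega) h.symm]

variable [Fintype V]

lemma exists_farthest_leaf (ht : T.IsTree) (hf : IsPendantPath T f m) (hm : 0 < m)
    (hmV : m + 1 < Fintype.card V) :
    ∃ x u, (∀ v, T.dist (f 0) v ≤ T.dist (f 0) x) ∧ T.Adj u x ∧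
      T.dist (f 0) u + 1 = T.dist (f 0) x ∧ T.neighborSet x = {u} ∧ u ≠ f 0 ∧
      ∀ i ≤ m, f i ≠ x := by
  obtain ⟨x, -, hmax⟩ := Finset.exists_max_image Finset.univ (T.dist (f 0)) ⟨f 0, Finset.mem_univ _⟩
  replace hmax : ∀ v, T.dist (f 0) v ≤ T.dist (f 0) x := fun v => hmax v (Finset.mem_univ v)
  have hx₀ : f 0 ≠ x := by
    rintro rfl
    have := hmax (f 1)
    rw [dist_self, Nat.le_zero, (dist_eq_one_iff_adj).2 (hf.adj hm)] at this
    exact one_ne_zero this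
  obtain ⟨u, hux, hud⟩ := ht.connected.exists_adj_dist_add_one_eq hx₀.symm
  have hleaf := ht.neighborSet_eq_of_forall_dist_le hmax hux hud
  have hx := hf.ne_of_isLeaf ht.connected hmV hleaf hx₀
  refine ⟨x, u, hmax, hux, hud, hleaf, ?_, hx⟩
  rintro rfl
  have : x ∈ T.neighborSet (f 0) := hux
  rw [hf.neighborSet_zero hm, Set.mem_singleton_iff] at this
  exact hx 1 hm this.symm

lemma exists_isStretch (ht : T.IsTree) (hf : IsPendantPath T f m) (hm : 0 < m)
    (hmV : m + 1 < Fintype.card V) :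
    ∃ S g, isStretch T S ∧ S.IsTree ∧ IsPendantPath S g (m + 1) := by
  obtain ⟨x, u, -, -, -, hleaf, -, hx⟩ := hf.exists_farthest_leaf ht hm hmV
  have hx₀ : f 0 ≠ x := hx 0 (Nat.zero_le m)
  have hxleaf : IsLeaf T x := isLeaf_iff_exists_neighborSet_eq.2 ⟨u, hleaf⟩
  have h₀leaf : IsLeaf T (f 0) := isLeaf_iff_exists_neighborSet_eq.2 ⟨f 1, hf.neighborSet_zero hm⟩
  exact ⟨T.moveLeaf (f 0) x, _, isStretch_moveLeaf hx₀ h₀leaf hxleaf, ht.moveLeaf hxleaf hx₀,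
    hf.moveLeaf hm hx⟩

lemma exists_isStretch_or_isExpand (ht : T.IsTree) (hf : IsPendantPath T f m) (hm : 0 < m)
    (hmV : m + 1 < Fintype.card V) :
    ∃ S g, (isStretch S T ∨ isExpand S T) ∧ S.IsTree ∧ IsPendantPath S g (m + 1) := by
  obtain ⟨x, u, hmax, hux, hud, hleaf, hur, hx⟩ := hf.exists_farthest_leaf ht hm hmV
  set r := f 0
  have hrx : r ≠ x := hx 0 (Nat.zero_le m)
  have hxleaf : IsLeaf T x := isLeaf_iff_exists_neighborSet_eq.2 ⟨u, hleaf⟩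
  refine ⟨T.moveLeaf r x, _, ?_, ht.moveLeaf hxleaf hrx, hf.moveLeaf hm hx⟩
  set S := T.moveLeaf r x
  suffices isStretch S (S.moveLeaf u x) ∨ isExpand S (S.moveLeaf u x) by
    rwa [moveLeaf_moveLeaf, moveLeaf_eq_self hleaf] at this
  have hux' : u ≠ x := hux.ne
  obtain ⟨z₀, hz₀u, hz₀d⟩ := ht.connected.exists_adj_dist_add_one_eq hur
  have hz₀x : z₀ ≠ x := by rintro rfl; omega
  have hSx : S.neighborSet x = {r} := neighborSet_moveLeaf_right hrx
  have hSu : S.neighborSet u = T.neighborSet u \ {x} := neighborSet_moveLeaf_of_ne hur hux'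
  have hSxleaf : IsLeaf S x := isLeaf_iff_exists_neighborSet_eq.2 ⟨r, hSx⟩
  by_cases hdeg : T.neighborSet u ⊆ {z₀, x}
  · refine .inl (isStretch_moveLeaf hux' (isLeaf_iff_exists_neighborSet_eq.2 ⟨z₀, ?_⟩) hSxleaf)
    ext z
    rw [hSu, Set.mem_sdiff, Set.mem_singleton_iff, Set.mem_singleton_iff]
    exact ⟨fun ⟨hz, hzx⟩ => (hdeg hz).resolve_right hzx, by rintro rfl; exact ⟨hz₀u.symm, hz₀x⟩⟩
  obtain ⟨z₁, hz₁u, hz₁⟩ := Set.not_subset.1 hdeg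
  simp only [Set.mem_insert_iff, Set.mem_singleton_iff, not_or] at hz₁
  have hz₀leaf : ¬ IsLeaf S z₀ := by
    by_cases hz₀r : z₀ = r
    · refine not_isLeaf_of_adj_of_adj (moveLeaf_adj_of_ne hz₀u hz₀x hux') ?_ hux'
      rw [hz₀r]
      exact (moveLeaf_adj hrx).2 (.inr (.inr ⟨rfl, rfl⟩))
    · obtain ⟨w, hwz₀, hwd⟩ := ht.connected.exists_adj_dist_add_one_eq hz₀r
      refine not_isLeaf_of_adj_of_adj (moveLeaf_adj_of_ne hz₀u hz₀x hux')
        (moveLeaf_adj_of_ne hwz₀.symm hz₀x ?_) ?_ <;> rintro rfl <;> omega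
  -- The neighbours of `u` other than its parent `z₀` are, like `x`, farthest from `r`.
  have hleaves : ∀ z, S.Adj u z → z ≠ z₀ → IsLeaf S z := by
    intro z hz hzz₀
    rw [← mem_neighborSet, hSu] at hz
    have hzd := (ht.dist_eq_add_one_of_adj_of_ne_s8 hz₀u hz₀d hz.1 hzz₀).trans hud
    have hzr : z ≠ r := by rintro rfl; rw [dist_self] at hzd; omega
    exact isLeaf_moveLeaf_of_ne (ht.neighborSet_eq_of_forall_dist_le (hzd ▸ hmax) hz.1
      (hud.trans hzd.symm)) hzr hz.2 hux'
  have hSux : ¬ S.Adj u x := fun h => by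
    have : u ∈ S.neighborSet x := h.symm
    exact hur (by rwa [hSx, Set.mem_singleton_iff] at this)
  exact .inr (isExpand_moveLeaf (moveLeaf_adj_of_ne hz₀u.symm hux' hz₀x) hz₀leaf hleaves
    (moveLeaf_adj_of_ne hz₁u hux' hz₁.2) hz₁.1 hSxleaf hux'.symm hSux)

end IsPendantPath

section Induction

variable [Fintype V] {T : SimpleGraph V} {f : ℕ → V} {m : ℕ}

lemma IsTree.exists_isPendantPath_one (ht : T.IsTree) (hV : 1 < Fintype.card V) :
    ∃ f, IsPendantPath T f 1 := by
  classical
  have : Nontrivial V := Fintype.one_lt_card_iff_nontrivial.1 hV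
  obtain ⟨v, hv⟩ := ht.exists_vert_degree_one_of_nontrivial
  obtain ⟨w, hw⟩ := isLeaf_iff_exists_neighborSet_eq.1 (degree_eq_one_iff_existsUnique_adj.1 hv)
  have hvw : v ≠ w := (show w ∈ T.neighborSet v from hw ▸ rfl).ne
  refine ⟨fun | 0 => v | _ => w, ⟨?_, fun _ => hw, fun i hi => by omega⟩⟩
  rintro (_ | _ | i) hi (_ | _ | j) hj h <;> simp_all

variable {P : SimpleGraph V → Prop}

lemma IsPendantPath.exists_spanning_of_isStretch
    (hStretch : ∀ T T', T.IsTree → isStretch T T' → P T → P T')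
    (ht : T.IsTree) (hf : IsPendantPath T f m) (hm : 0 < m) (hmV : m < Fintype.card V)
    (hP : P T) : ∃ S g, IsPendantPath S g (Fintype.card V - 1) ∧ P S := by
  induction hk : Fintype.card V - 1 - m generalizing T f m with
  | zero =>
    obtain rfl : m = Fintype.card V - 1 := by omega
    exact ⟨T, f, hf, hP⟩
  | succ k ih =>
    obtain ⟨S, g, hTS, hS, hg⟩ := hf.exists_isStretch ht hm (by omega)
    exact ih hS hg (by omega) (by omega) (hStretch T S ht hTS hP) (by omega)

lemma IsPendantPath.of_isStretch_of_isExpand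
    (hStretch : ∀ T T', T.IsTree → isStretch T T' → P T → P T')
    (hExpand : ∀ T T', T.IsTree → isExpand T T' → P T → P T')
    (hspanning : ∀ S g, IsPendantPath S g (Fintype.card V - 1) → P S)
    (ht : T.IsTree) (hf : IsPendantPath T f m) (hm : 0 < m) (hmV : m < Fintype.card V) : P T := by
  induction hk : Fintype.card V - 1 - m generalizing T f m with
  | zero =>
    obtain rfl : m = Fintype.card V - 1 := by omega
    exact hspanning T f hf
  | succ k ih =>
    obtain ⟨S, g, hST | hST, hS, hg⟩ := hf.exists_isStretch_or_isExpand ht hm (by omega)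
    · exact hStretch S T hS hST (ih hS hg (by omega) (by omega) (by omega))
    · exact hExpand S T hS hST (ih hS hg (by omega) (by omega) (by omega))

end Induction

end SimpleGraph

/-- If an (isomorphism-invariant) property of trees holds for some tree on `n` vertices
and is preserved by Stretching and Expanding, then it holds for every tree on `n`
vertices. -/
theorem stmt_8 (n : ℕ) (P : SimpleGraph (Fin n) → Prop)
    (hIso : ∀ T T' : SimpleGraph (Fin n), Nonempty (T ≃g T') → P T → P T')
    (hStretch : ∀ T T' : SimpleGraph (Fin n), T.IsTree → isStretch T T' → P T → P T')
    (hExpand : ∀ T T' : SimpleGraph (Fin n), T.IsTree → isExpand T T' → P T → P T')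
    (T0 : SimpleGraph (Fin n)) (hT0 : T0.IsTree) (hP : P T0) :
    ∀ T : SimpleGraph (Fin n), T.IsTree → P T := by
  intro T hT
  rcases le_or_gt n 1 with hn | hn
  · have : Subsingleton (Fin n) := Fin.subsingleton_iff_le_one.2 hn
    obtain rfl : T = T0 := by ext x y; simp [Subsingleton.elim x y]
    exact hP
  have hV : 1 < Fintype.card (Fin n) := by simpa using hn
  obtain ⟨f₀, hf₀⟩ := hT0.exists_isPendantPath_one hV
  obtain ⟨S, g, hg, hPS⟩ := hf₀.exists_spanning_of_isStretch hStretch hT0 one_pos hV hP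
  obtain ⟨f, hf⟩ := hT.exists_isPendantPath_one hV
  refine hf.of_isStretch_of_isExpand hStretch hExpand (fun S' g' hg' => hIso S S' ?_ hPS) hT
    one_pos hV
  obtain ⟨e⟩ := hg.nonempty_iso_pathGraph
  obtain ⟨e'⟩ := hg'.nonempty_iso_pathGraph
  exact ⟨e.symm.trans e'⟩
end

section
/- Let H be a graph and let F be the disjoint union of graphs F_1,…,F_r. Let I be the set of orders of the components, n(F) the maximum order, and k_i(F) the number of components of order i. Then R(F,H) ≤ max over j ∈ I of ( max over components F_p with v(F_p)=j of R(F_p,H) ) + Σ_{i=j}^{n(F)} i·k_i(F) − j. -/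
open SimpleGraph Finset

/-!
The components are embedded greedily, largest first. If `F_a` has maximal order, then
`N ≥ R(F_a, H)`, so either there is a blue `H` or a red copy of `F_a`. Deleting the `v(F_a)`
vertices of that copy lowers every term of the bound for the remaining components by exactly
`v(F_a)`, since `F_a` is counted in the tail sum `Σ_{i ≥ j} i·k_i` of every order `j ≤ v(F_a)`;
so induction applies to the remaining vertices.
-/

section UnionBound

variable {ι : Type*} (n ρ : ι → ℕ)

/-- `Σ_{i=j}^{n(F)} i·k_i(F)`, summed over the components instead of over the orders. -/
def tailSum (s : Finset ι) (j : ℕ) : ℕ := ∑ i ∈ s with j ≤ n i, n i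

/-- The paper's bound, with the maximum over orders `j ∈ I` taken over components instead. -/
def unionBound (s : Finset ι) : ℕ := s.sup fun i => ρ i + tailSum n s (n i) - n i

variable {n ρ} {s : Finset ι}

theorem le_tailSum {i : ι} (hi : i ∈ s) : n i ≤ tailSum n s (n i) :=
  single_le_sum (f := n) (fun _ _ => Nat.zero_le _) (mem_filter.2 ⟨hi, le_rfl⟩)

theorem le_unionBound {i : ι} (hi : i ∈ s) : ρ i ≤ unionBound n ρ s :=
  calc ρ i ≤ ρ i + tailSum n s (n i) - n i := by have := le_tailSum (n := n) hi; omega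
    _ ≤ unionBound n ρ s := le_sup (f := fun i => ρ i + tailSum n s (n i) - n i) hi

theorem tailSum_insert_of_le [DecidableEq ι] {a : ι} {j : ℕ} (ha : a ∉ s) (hj : j ≤ n a) :
    tailSum n (insert a s) j = tailSum n s j + n a := by
  rw [tailSum, filter_insert, if_pos hj, sum_insert (fun h => ha (mem_filter.1 h).1), add_comm,
    tailSum]

theorem unionBound_le_unionBound_insert_sub [DecidableEq ι] {a : ι} (ha : a ∉ s)
    (hmax : ∀ i ∈ s, n i ≤ n a) : unionBound n ρ s ≤ unionBound n ρ (insert a s) - n a := by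
  refine Finset.sup_le fun i hi => ?_
  have hle : ρ i + tailSum n (insert a s) (n i) - n i ≤ unionBound n ρ (insert a s) :=
    le_sup (f := fun i => ρ i + tailSum n (insert a s) (n i) - n i) (mem_insert_of_mem hi)
  rw [tailSum_insert_of_le ha (hmax i hi)] at hle
  have := le_tailSum (n := n) hi
  omega

theorem tailSum_eq_sum_Icc (s : Finset ι) (j : ℕ) :
    tailSum n s j = ∑ i ∈ Icc j (s.sup n), i * #{p ∈ s | n p = i} := by
  rw [tailSum, ← sum_fiberwise_of_maps_to (g := n) (t := Icc j (s.sup n))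
    (fun p hp => mem_Icc.2 ⟨(mem_filter.1 hp).2, le_sup (mem_filter.1 hp).1⟩)]
  refine sum_congr rfl fun i hi => ?_
  have hji : j ≤ i := (mem_Icc.1 hi).1
  rw [filter_filter, sum_const_nat fun p hp => (mem_filter.1 hp).2.2, mul_comm]
  congr 2
  exact filter_congr fun p _ => ⟨And.right, fun h => ⟨h ▸ hji, h⟩⟩

theorem unionBound_le_sup_sum_Icc (s : Finset ι) :
    unionBound n ρ s ≤ (s.image n).sup (fun j =>
        ({p ∈ s | n p = j}.sup ρ) + (∑ i ∈ Icc j (s.sup n), i * #{p ∈ s | n p = i}) - j) := by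
  refine Finset.sup_le fun i hi => ?_
  refine le_trans ?_ (le_sup (f := fun j => ({p ∈ s | n p = j}.sup ρ) +
    (∑ i ∈ Icc j (s.sup n), i * #{p ∈ s | n p = i}) - j) (mem_image_of_mem n hi))
  have hρ : ρ i ≤ {p ∈ s | n p = n i}.sup ρ := le_sup (mem_filter.2 ⟨hi, rfl⟩)
  rw [← tailSum_eq_sum_Icc]
  omega

end UnionBound

theorem graphEmbeds_iff_isContained {V X : Type*} {G : SimpleGraph V} {R : SimpleGraph X} :
    graphEmbeds G R ↔ G ⊑ R :=
  ⟨fun ⟨f, hf, hadj⟩ => ⟨⟨⟨f, hadj _ _⟩, hf⟩⟩,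
    fun ⟨c⟩ => ⟨c, c.injective, fun _ _ => c.toHom.map_adj⟩⟩

theorem SimpleGraph.compl_comap {V X : Type*} (R : SimpleGraph X) (e : V ↪ X) :
    (R.comap e)ᶜ = Rᶜ.comap e := by
  ext u v
  simp [e.injective.ne_iff]

theorem SimpleGraph.IsContained.of_comap {U V X : Type*} {G : SimpleGraph U} {R : SimpleGraph X}
    {e : V ↪ X} (h : G ⊑ R.comap e) : G ⊑ R :=
  h.trans (Embedding.comap e R).isContained

theorem SimpleGraph.IsContained.of_compl_comap {U V X : Type*} {G : SimpleGraph U}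
    {R : SimpleGraph X} {e : V ↪ X} (h : G ⊑ (R.comap e)ᶜ) : G ⊑ Rᶜ :=
  (R.compl_comap e ▸ h).of_comap

namespace isRamsey

variable {V W : Type*} {G : SimpleGraph V} {H : SimpleGraph W} {N : ℕ}

theorem isContained_or_of_le_card (h : isRamsey G H N) {X : Type*} [Fintype X]
    (hN : N ≤ Fintype.card X) (R : SimpleGraph X) : G ⊑ R ∨ H ⊑ Rᶜ := by
  obtain ⟨e⟩ := Function.Embedding.nonempty_of_card_le
    (by simpa using hN : Fintype.card (Fin N) ≤ Fintype.card X)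
  simp only [isRamsey, graphEmbeds_iff_isContained] at h
  exact (h (R.comap e)).imp IsContained.of_comap IsContained.of_compl_comap

theorem of_isContained {U : Type*} {G' : SimpleGraph U} (hG : G' ⊑ G) (h : isRamsey G H N) :
    isRamsey G' H N := by
  simp only [isRamsey, graphEmbeds_iff_isContained] at h ⊢
  exact fun R => (h R).imp_left hG.trans

end isRamsey

theorem isContained_sigmaUnion {r : ℕ} {n : Fin r → ℕ} (Fs : ∀ i, SimpleGraph (Fin (n i)))
    (p : Fin r) : Fs p ⊑ sigmaUnion Fs :=
  ⟨⟨⟨Sigma.mk (β := fun i => Fin (n i)) p, fun hab => ⟨p, _, _, rfl, rfl, hab⟩⟩,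
    sigma_mk_injective⟩⟩

section UnionCopy

variable {ι : Type*} {V : ι → Type*} (F : ∀ i, SimpleGraph (V i)) {X : Type*}

/-- `g` is defined only on `s`, so that `s = ∅` needs no vertex of `X`. -/
def IsUnionCopy (s : Finset ι) (R : SimpleGraph X) (g : ∀ i ∈ s, V i → X) : Prop :=
  (∀ i hi a b, (F i).Adj a b → R.Adj (g i hi a) (g i hi b)) ∧
    ∀ i hi j hj a b, g i hi a = g j hj b → (⟨i, a⟩ : Σ i, V i) = ⟨j, b⟩

variable {F} {s : Finset ι} {R : SimpleGraph X} {g : ∀ i ∈ s, V i → X}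

theorem IsUnionCopy.map {Y : Type*} {R' : SimpleGraph Y} (hg : IsUnionCopy F s R g)
    (φ : Copy R R') : IsUnionCopy F s R' fun i hi v => φ (g i hi v) :=
  ⟨fun i hi a b hab => φ.toHom.map_adj (hg.1 i hi a b hab),
    fun i hi j hj a b h => hg.2 i hi j hj a b (φ.injective h)⟩

theorem IsUnionCopy.cons [DecidableEq ι] {a : ι} (ha : a ∉ s) (f : Copy (F a) R)
    (hg : IsUnionCopy F s R g) (hdisj : ∀ i hi v, g i hi v ∉ Set.range f) :
    IsUnionCopy F (insert a s) R (Pi.cons s a (⇑f) g) := by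
  have eval : ∀ i (hi : i ∈ s) h, Pi.cons s a (⇑f) g i h = g i hi := fun i hi h =>
    Pi.cons_ne (by rintro rfl; exact ha hi)
  refine ⟨fun i hi u v huv => ?_, fun i hi j hj u v huv => ?_⟩
  · obtain rfl | hi := mem_insert.1 hi
    · simp only [Pi.cons_same]
      exact f.toHom.map_adj huv
    · simpa only [eval i hi] using hg.1 i hi u v huv
  · obtain rfl | hi' := mem_insert.1 hi <;> obtain rfl | hj' := mem_insert.1 hj
    · simp only [Pi.cons_same] at huv
      rw [f.injective huv]
    · simp only [Pi.cons_same, eval j hj'] at huv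
      exact absurd ⟨u, huv⟩ (hdisj j hj' v)
    · simp only [Pi.cons_same, eval i hi'] at huv
      exact absurd ⟨v, huv.symm⟩ (hdisj i hi' u)
    · simp only [eval i hi', eval j hj'] at huv
      exact hg.2 i hi' j hj' u v huv

theorem exists_isUnionCopy_or_isContained_compl [DecidableEq ι] [∀ i, Fintype (V i)]
    {W : Type*} {H : SimpleGraph W} {ρ : ι → ℕ} (hρ : ∀ i, isRamsey (F i) H (ρ i))
    (s : Finset ι) [Fintype X] (R : SimpleGraph X)
    (hX : unionBound (fun i => Fintype.card (V i)) ρ s ≤ Fintype.card X) :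
    (∃ g, IsUnionCopy F s R g) ∨ H ⊑ Rᶜ := by
  induction s using Finset.induction_on_max_value (fun i => Fintype.card (V i))
    generalizing X with
  | empty =>
    exact Or.inl ⟨Pi.empty _, fun i hi => absurd hi (notMem_empty i),
      fun i hi => absurd hi (notMem_empty i)⟩
  | insert a s ha hmax ih =>
    classical
    obtain hred | hblue :=
      (hρ a).isContained_or_of_le_card ((le_unionBound (mem_insert_self a s)).trans hX) R
    swap
    · exact Or.inr hblue
    obtain ⟨f⟩ := hred
    have hrest : Fintype.card {x // x ∉ Set.range f} = Fintype.card X - Fintype.card (V a) := by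
      rw [Fintype.card_subtype_compl, Set.card_range_of_injective (f := ⇑f) f.injective]
    have hbound :=
      (unionBound_le_unionBound_insert_sub ha hmax).trans (Nat.sub_le_sub_right hX _)
    obtain ⟨g, hg⟩ | hblue :=
      ih (R.comap (Function.Embedding.subtype (· ∉ Set.range f))) (hrest ▸ hbound)
    · exact Or.inl
        ⟨_, (hg.map (Embedding.comap _ R).toCopy).cons ha f fun i hi v => (g i hi v).2⟩
    · exact Or.inr hblue.of_compl_comap

end UnionCopy

theorem IsUnionCopy.graphEmbeds_sigmaUnion {r : ℕ} {n : Fin r → ℕ}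
    {Fs : ∀ i, SimpleGraph (Fin (n i))} {X : Type*} {R : SimpleGraph X}
    {g : ∀ i ∈ (univ : Finset (Fin r)), Fin (n i) → X} (hg : IsUnionCopy Fs univ R g) :
    graphEmbeds (sigmaUnion Fs) R :=
  ⟨fun x => g x.1 (mem_univ _) x.2, fun _ _ h => hg.2 _ _ _ _ _ _ h,
    fun _ _ ⟨i, a, b, hx, hy, hab⟩ => hx ▸ hy ▸ hg.1 i (mem_univ i) a b hab⟩

/-- Theorem 4.3 (upper bound): for the disjoint union `F` of graphs `F_1,…,F_r`,
`R(F,H) ≤ max_{j ∈ I} ( max_{v(F_p)=j} R(F_p,H) + Σ_{i=j}^{n(F)} i·k_i(F) − j )`. -/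
theorem stmt_13 {W : Type*} (H : SimpleGraph W) (r : ℕ) (n : Fin r → ℕ)
    (Fs : ∀ i, SimpleGraph (Fin (n i))) :
    ramsey (sigmaUnion Fs) H ≤
      (Finset.univ.image n).sup (fun j =>
        ((Finset.univ.filter (fun p => n p = j)).sup fun p => ramsey (Fs p) H) +
          (∑ i ∈ Finset.Icc j (Finset.univ.sup n),
            i * (Finset.univ.filter (fun p => n p = i)).card) - j) := by
  obtain ⟨N, hN⟩ | hnone := {N | isRamsey (sigmaUnion Fs) H N}.eq_empty_or_nonempty.symm
  · have hρ : ∀ p, isRamsey (Fs p) H (ramsey (Fs p) H) := fun p =>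
      Nat.sInf_mem (s := {N | isRamsey (Fs p) H N})
        ⟨N, hN.of_isContained (isContained_sigmaUnion Fs p)⟩
    refine le_trans (Nat.sInf_le fun R => ?_) (unionBound_le_sup_sum_Icc (n := n) _)
    rcases exists_isUnionCopy_or_isContained_compl hρ univ R (by simp) with ⟨g, hg⟩ | hblue
    · exact Or.inl hg.graphEmbeds_sigmaUnion
    · exact Or.inr (graphEmbeds_iff_isContained.2 hblue)
  · -- no `N` works, so `ramsey` takes its junk value `sInf ∅ = 0`
    rw [ramsey, hnone, Nat.sInf_empty]
    exact Nat.zero_le _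
end

section
/- In any red/blue edge-coloring of K_N with N = (n−1)(m−1)+2 (n ≥ 3, m ≥ 2) that contains no blue copy of 2K_m, there exists a red path P_{n−1} on n−1 vertices. -/
open SimpleGraph Finset

/-!
Chvátal's argument: if every red path inside a vertex set `s` has at most `k` vertices and
`k * m < #s`, then `s` contains a blue `K_(m+1)`. Indeed the head of a longest red path in `s` has
no red neighbour in `s` off the path, so deleting the path (at most `k` vertices) and recursing
gives a blue `K_m` to which the head can be added. With no red `P_(n-1)`, this yields a blue `K_m`
among the `(n-1)(m-1)+2` vertices, and again one among the `(n-2)(m-1)+1` vertices outside it.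
-/

variable {V : Type*}

theorem graphEmbeds_pathGraph {G : SimpleGraph V} {L : List V} {k : ℕ}
    (hnd : L.Nodup) (hch : L.IsChain G.Adj) (hk : k ≤ L.length) :
    graphEmbeds (pathGraph k) G := by
  refine ⟨fun i => L[i.1], fun i j hij => Fin.ext ((hnd.getElem_inj_iff).mp hij), ?_⟩
  intro i j hij
  rcases pathGraph_adj.mp hij with h | h
  · simpa [← h] using List.isChain_iff_getElem.mp hch i (by omega)
  · simpa [← h] using (List.isChain_iff_getElem.mp hch j (by omega)).symm

theorem graphEmbeds_kCliques {H : SimpleGraph V} {t m : ℕ} {ts : Fin t → Finset V}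
    (hclique : ∀ i, H.IsNClique m (ts i)) (hdisj : Pairwise fun i j => Disjoint (ts i) (ts j)) :
    graphEmbeds (kCliques t m) H := by
  let e : ∀ i, Fin m → V := fun i a => ((ts i).equivFinOfCardEq (hclique i).card_eq).symm a
  have he_mem : ∀ i a, e i a ∈ ts i := fun i a => Subtype.property _
  have he_inj : ∀ i, Function.Injective (e i) := fun i =>
    Subtype.val_injective.comp (Equiv.injective _)
  refine ⟨fun p => e p.1 p.2, ?_, ?_⟩
  · rintro ⟨i, a⟩ ⟨j, b⟩ (h : e i a = e j b)
    obtain rfl : i = j := by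
      by_contra hij
      exact Finset.disjoint_left.mp (hdisj hij) (he_mem i a) (h ▸ he_mem j b)
    rw [he_inj i h]
  · rintro ⟨i, a⟩ ⟨j, b⟩ ⟨rfl, hab⟩
    exact (hclique i).isClique (he_mem i a) (he_mem i b) ((he_inj i).ne hab)

def IsPathListIn (G : SimpleGraph V) (s : Finset V) (L : List V) : Prop :=
  L.Nodup ∧ L.IsChain G.Adj ∧ ∀ v ∈ L, v ∈ s

section PathListIn

variable {G : SimpleGraph V} {s : Finset V}

theorem IsPathListIn.mono {s' : Finset V} {L : List V} (hL : IsPathListIn G s' L) (hs : s' ⊆ s) :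
    IsPathListIn G s L :=
  ⟨hL.1, hL.2.1, fun v hv => hs (hL.2.2 v hv)⟩

theorem exists_longest_pathListIn {k : ℕ} (hbound : ∀ L, IsPathListIn G s L → L.length ≤ k) :
    ∃ L, IsPathListIn G s L ∧ ∀ L', IsPathListIn G s L' → L'.length ≤ L.length := by
  classical
  let P : ℕ → Prop := fun l => ∃ L, IsPathListIn G s L ∧ L.length = l
  obtain ⟨L, hL, hlen⟩ : P (Nat.findGreatest P k) :=
    Nat.findGreatest_spec (Nat.zero_le k) ⟨[], by simp [IsPathListIn], rfl⟩
  exact ⟨L, hL, fun L' hL' => hlen ▸ Nat.le_findGreatest (hbound L' hL') ⟨L', hL', rfl⟩⟩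

theorem mem_of_adj_head_of_longest {v w : V} {T : List V} (hL : IsPathListIn G s (v :: T))
    (hmax : ∀ L', IsPathListIn G s L' → L'.length ≤ (v :: T).length)
    (hw : w ∈ s) (hadj : G.Adj w v) : w ∈ v :: T := by
  by_contra hwL
  have hext : IsPathListIn G s (w :: v :: T) :=
    ⟨List.nodup_cons.mpr ⟨hwL, hL.1⟩, List.isChain_cons_cons.mpr ⟨hadj, hL.2.1⟩,
      by simpa [hw] using hL.2.2⟩
  simpa using hmax _ hext

theorem exists_isNClique_compl_of_pathListIn_length_le [DecidableEq V] {k m : ℕ}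
    (hbound : ∀ L, IsPathListIn G s L → L.length ≤ k) (hs : k * m < #s) :
    ∃ t ⊆ s, Gᶜ.IsNClique (m + 1) t := by
  induction m generalizing s with
  | zero =>
    obtain ⟨u, hu⟩ := card_pos.mp (by omega : 0 < #s)
    exact ⟨{u}, singleton_subset_iff.mpr hu, isNClique_one.mpr ⟨u, rfl⟩⟩
  | succ m ih =>
    obtain ⟨u, hu⟩ := card_pos.mp (by omega : 0 < #s)
    obtain ⟨L, hL, hmax⟩ := exists_longest_pathListIn hbound
    obtain ⟨v, T, rfl⟩ : ∃ v T, L = v :: T := List.exists_cons_of_ne_nil fun hnil => by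
      simpa [hnil] using hmax [u] ⟨List.nodup_singleton u, List.isChain_singleton u, by simpa⟩
    set s' := s \ (v :: T).toFinset
    have hs' : k * m < #s' := by
      have hlen : #(v :: T).toFinset ≤ k := (List.toFinset_card_le _).trans (hbound _ hL)
      have : #s - #(v :: T).toFinset ≤ #s' := le_card_sdiff _ _
      rw [Nat.mul_succ] at hs
      omega
    obtain ⟨t, hts', ht⟩ := ih (fun L' hL' => hbound L' (hL'.mono sdiff_subset)) hs'
    have hv : v ∈ s := hL.2.2 v List.mem_cons_self
    refine ⟨insert v t, insert_subset hv (hts'.trans sdiff_subset), ht.insert fun w hw => ?_⟩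
    obtain ⟨hws, hwL⟩ := mem_sdiff.mp (hts' hw)
    refine (compl_adj G v w).mpr ⟨?_, fun hadj => hwL ?_⟩
    · rintro rfl; simp at hwL
    · exact List.mem_toFinset.mpr (mem_of_adj_head_of_longest hL hmax hws hadj.symm)

end PathListIn

/-- In any red/blue coloring of `K_N` with `N = (n-1)(m-1)+2` (`n ≥ 3`, `m ≥ 2`)
containing no blue `2K_m`, there is a red path on `n - 1` vertices. -/
theorem stmt_18 (n m : ℕ) (hn : 3 ≤ n) (hm : 2 ≤ m)
    (R : SimpleGraph (Fin ((n - 1) * (m - 1) + 2)))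
    (hblue : ¬ graphEmbeds (kCliques 2 m) Rᶜ) :
    graphEmbeds (pathGraph (n - 1)) R := by
  by_contra hpath
  have hshort : ∀ s L, IsPathListIn R s L → L.length ≤ n - 2 := fun s L hL => by
    by_contra hlong
    exact hpath (graphEmbeds_pathGraph hL.1 hL.2.1 (by omega))
  have hN : (n - 1) * (m - 1) = (n - 2) * (m - 1) + (m - 1) := by
    rw [show n - 1 = n - 2 + 1 by omega, add_one_mul]
  have hm' : m - 1 + 1 = m := by omega
  obtain ⟨t, -, ht⟩ := exists_isNClique_compl_of_pathListIn_length_le (s := univ) (m := m - 1)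
    (hshort univ) (by rw [card_univ, Fintype.card_fin]; omega)
  rw [hm'] at ht
  obtain ⟨t', ht't, ht'⟩ := exists_isNClique_compl_of_pathListIn_length_le (s := tᶜ) (m := m - 1)
    (hshort tᶜ) (by rw [card_compl, Fintype.card_fin, ht.card_eq]; omega)
  rw [hm'] at ht'
  refine hblue (graphEmbeds_kCliques (ts := ![t, t']) (fun i => ?_) fun i j hij => ?_)
  · fin_cases i <;> assumption
  · have hdisj : Disjoint t' t := subset_compl_iff_disjoint_right.mp ht't
    fin_cases i <;> fin_cases j <;> simp_all [hdisj.symm]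
end
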